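/- arXiv:1011.6191 — 15 statements merged into one kernel-verified Lean document; each statement's English description precedes it below -/
import Mathlib

section
/- A metric space (X,d) has intrinsic metric if and only if for all x, y ∈ X and every ε > 0 the set ω(x,y,ε) = {z ∈ X : 2·max(d(x,z), d(z,y)) < d(x,y) + ε} is nonempty. -/
/-!
Cutting a chain from `x` to `y` at the last point up to which its length is at most half the
total gives a point of `ω(x, y, ε)`, because the steps are short. Conversely, bisecting `n` times
with points of `ω` produces a chain of `2 ^ n` steps, each shorter than `(d(x, y) + ε) / 2 ^ n`.
-/

open Finset

lemma exists_le_and_lt_add_of_forall_lt_add {f : ℕ → ℝ} {k : ℕ} {c δ : ℝ} (hδ : 0 < δ)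
    (h0 : f 0 ≤ c) (hk : c ≤ f k) (hstep : ∀ i < k, f (i + 1) < f i + δ) :
    ∃ i ≤ k, f i ≤ c ∧ c < f i + δ := by
  induction k with
  | zero => exact ⟨0, le_rfl, h0, by linarith [le_antisymm h0 hk]⟩
  | succ k ih =>
    by_cases hck : c ≤ f k
    · obtain ⟨i, hik, hi⟩ := ih hck fun i hi => hstep i (by omega)
      exact ⟨i, by omega, hi⟩
    · exact ⟨k, by omega, (not_le.1 hck).le, hk.trans_lt (hstep k k.lt_succ_self)⟩

section Chain

variable {X : Type*} [MetricSpace X]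

lemma exists_two_mul_max_dist_lt_sum_add (z : ℕ → X) (k : ℕ) {δ : ℝ} (hδ : 0 < δ)
    (hstep : ∀ i < k, dist (z i) (z (i + 1)) < δ) :
    ∃ w, 2 * max (dist (z 0) w) (dist w (z k)) <
      ∑ i ∈ range k, dist (z i) (z (i + 1)) + 2 * δ := by
  set S : ℕ → ℝ := fun n => ∑ i ∈ range n, dist (z i) (z (i + 1)) with hS
  have hS0 : 0 ≤ S k := sum_nonneg fun _ _ => dist_nonneg
  obtain ⟨i, hik, hiS, hSi⟩ := exists_le_and_lt_add_of_forall_lt_add (f := S) (c := S k / 2) hδ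
    (by simpa [hS] using div_nonneg hS0 zero_le_two) (half_le_self hS0) fun i hi => by
      simpa [hS, sum_range_succ] using hstep i hi
  have hfirst : dist (z 0) (z i) ≤ S i := dist_le_range_sum_dist z i
  have hlast : dist (z i) (z k) ≤ S k - S i := by
    have := dist_le_Ico_sum_dist z hik
    have := sum_range_add_sum_Ico (fun j => dist (z j) (z (j + 1))) hik
    simp only [hS] at *
    linarith
  exact ⟨z i, by rw [mul_max_of_nonneg _ _ zero_le_two, max_lt_iff]; constructor <;> linarith⟩

def HasChain (x y : X) (k : ℕ) (r : ℝ) : Prop :=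
  ∃ z : ℕ → X, z 0 = x ∧ z k = y ∧ ∀ i < k, dist (z i) (z (i + 1)) < r

lemma hasChain_one {x y : X} {r : ℝ} (h : dist x y < r) : HasChain x y 1 r :=
  ⟨fun i => if i = 0 then x else y, rfl, rfl, fun i hi => by
    obtain rfl : i = 0 := by omega
    simpa using h⟩

lemma HasChain.mono {x y : X} {k : ℕ} {r r' : ℝ} (h : HasChain x y k r) (hr : r ≤ r') :
    HasChain x y k r' :=
  let ⟨z, hz0, hzk, hstep⟩ := h
  ⟨z, hz0, hzk, fun i hi => (hstep i hi).trans_le hr⟩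

lemma HasChain.trans {x y w : X} {m n : ℕ} {r : ℝ} (h₁ : HasChain x y m r)
    (h₂ : HasChain y w n r) : HasChain x w (m + n) r := by
  obtain ⟨z₁, hz₁0, hz₁m, hstep₁⟩ := h₁
  obtain ⟨z₂, hz₂0, hz₂n, hstep₂⟩ := h₂
  set z : ℕ → X := fun i => if i < m then z₁ i else z₂ (i - m) with hz
  have hleft : ∀ i ≤ m, z i = z₁ i := by
    intro i hi
    rcases hi.lt_or_eq with hi | rfl
    · simp [hz, hi]
    · simp [hz, hz₁m, hz₂0]
  have hright : ∀ i, m ≤ i → z i = z₂ (i - m) := fun i hi => by simp [hz, not_lt.2 hi]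
  refine ⟨z, by rw [hleft 0 m.zero_le, hz₁0], by rw [hright _ (by omega), ← hz₂n]; congr 1; omega,
    fun i hi => ?_⟩
  by_cases him : i < m
  · rw [hleft i him.le, hleft (i + 1) him]
    exact hstep₁ i him
  · rw [hright i (by omega), hright (i + 1) (by omega), show i + 1 - m = i - m + 1 by omega]
    exact hstep₂ (i - m) (by omega)

/-- A point `m` with `2 d(x, m) < d(x, y) + ε / 2` leaves room for an error of `ε / 4` in each
half. -/
lemma hasChain_two_pow
    (H : ∀ x y : X, ∀ ε > (0 : ℝ), ∃ z : X, 2 * max (dist x z) (dist z y) < dist x y + ε)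
    (n : ℕ) {x y : X} {ε : ℝ} (hε : 0 < ε) :
    HasChain x y (2 ^ n) ((dist x y + ε) / 2 ^ n) := by
  induction n generalizing x y ε with
  | zero => simpa using hasChain_one (by linarith : dist x y < dist x y + ε)
  | succ n ih =>
    obtain ⟨m, hm⟩ := H x y (ε / 2) (by positivity)
    rw [mul_max_of_nonneg _ _ zero_le_two, max_lt_iff] at hm
    have halve : ∀ a : ℝ, 2 * a < dist x y + ε / 2 →
        (a + ε / 4) / 2 ^ n ≤ (dist x y + ε) / 2 ^ (n + 1) := fun a ha => by
      rw [pow_succ', ← div_div]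
      gcongr
      linarith
    rw [show 2 ^ (n + 1) = 2 ^ n + 2 ^ n by ring]
    exact ((ih (by positivity)).mono (halve _ hm.1)).trans
      ((ih (by positivity)).mono (halve _ hm.2))

end Chain

/-- A metric space has intrinsic metric iff for all `x y` and every `ε > 0`,
the set `ω(x,y,ε) = {z | 2 * max (d x z) (d z y) < d x y + ε}` is nonempty. -/
theorem intrinsic_iff_midpointish {X : Type*} [MetricSpace X] :
    (∀ x y : X, ∀ ε > (0 : ℝ), ∃ (k : ℕ) (z : ℕ → X), z 0 = x ∧ z k = y ∧
      (∀ i < k, dist (z i) (z (i + 1)) < ε) ∧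
      (∑ i ∈ Finset.range k, dist (z i) (z (i + 1))) < dist x y + ε) ↔
    (∀ x y : X, ∀ ε > (0 : ℝ),
      ({z : X | 2 * max (dist x z) (dist z y) < dist x y + ε}).Nonempty) := by
  constructor
  · intro H x y ε hε
    obtain ⟨k, z, rfl, rfl, hstep, hsum⟩ := H x y (ε / 3) (by positivity)
    obtain ⟨w, hw⟩ := exists_two_mul_max_dist_lt_sum_add z k (by positivity) hstep
    exact ⟨w, by simp only [Set.mem_ofPred_eq]; linarith⟩
  · intro H x y ε hε
    obtain ⟨n, hn⟩ := pow_unbounded_of_one_lt ((dist x y + ε) / ε) one_lt_two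
    have hr : (dist x y + ε) / 2 ^ n < ε := by
      rwa [div_lt_iff₀ (by positivity), ← div_lt_iff₀' hε]
    obtain ⟨z, hz0, hzk, hstep⟩ := hasChain_two_pow H n hε
    refine ⟨2 ^ n, z, hz0, hzk, fun i hi => (hstep i hi).trans hr, ?_⟩
    calc ∑ i ∈ range (2 ^ n), dist (z i) (z (i + 1))
        < ∑ _i ∈ range (2 ^ n), (dist x y + ε) / 2 ^ n :=
          sum_lt_sum_of_nonempty (by simp) fun i hi => hstep i (mem_range.1 hi)
      _ = dist x y + ε := by simp [mul_div_cancel₀]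
end

section
/- Let (X,d) be a metric space. The Hausdorff distance on the collection B[X] of all nonempty closed bounded subsets of X has intrinsic metric — i.e., for all M, W ∈ B[X] and every ε > 0 there exist M₀ = M, M₁, …, M_k = W in B[X] with hausdorffDist(M_i, M_{i+1}) < ε for every i < k and the sum of the hausdorffDist(M_i, M_{i+1}) less than hausdorffDist(M,W) + ε — if and only if (X,d) has intrinsic metric. -/
/-!
Singletons embed `X` isometrically into the space of closed bounded sets, and a chain of sets
from `{x}` to `{y}` can be followed in `X` by repeatedly stepping to a nearly closest point of
the next set; this gives the forward direction. Conversely, given `M` and `W`, join every point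
of `M` to a nearly closest point of `W`, and every point of `W` to one of `M`, by a short chain
in `X`. After reparametrising all these chains to a common number `n` of steps, each of length
at most `ρ ≈ hausdorffDist M W / n`, the closures of the sets of their `j`-th points form a
chain `M = A₀, …, Aₙ = W` of closed bounded sets with consecutive Hausdorff distances at most `ρ`.
-/

open Metric Bornology Set Finset

def IntrinsicMetric (X : Type*) [PseudoMetricSpace X] : Prop :=
  ∀ x y : X, ∀ ε > (0 : ℝ), ∃ (k : ℕ) (z : ℕ → X), z 0 = x ∧ z k = y ∧
    (∀ i < k, dist (z i) (z (i + 1)) < ε) ∧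
    (∑ i ∈ Finset.range k, dist (z i) (z (i + 1))) < dist x y + ε

/-- Sampling a monotone sequence with increments below `η` at the last index below each level
`j * S k / n` gives `n` increments of size at most `S k / n + η`. -/
lemma Monotone.exists_reindex_sub_le {S : ℕ → ℝ} (hS : Monotone S) (hS0 : S 0 = 0) {k n : ℕ}
    (hn : 0 < n) {η : ℝ} (hη : 0 ≤ η) (hstep : ∀ i < k, S (i + 1) < S i + η) :
    ∃ m : ℕ → ℕ, Monotone m ∧ S (m 0) = 0 ∧ m n = k ∧
      ∀ j < n, S (m (j + 1)) - S (m j) ≤ S k / n + η := by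
  classical
  set L := S k
  have hL : 0 ≤ L := hS0 ▸ hS (Nat.zero_le k)
  have hn' : (0 : ℝ) < n := by exact_mod_cast hn
  let m : ℕ → ℕ := fun j => Nat.findGreatest (fun i => S i ≤ j * L / n) k
  have upper (j : ℕ) : S (m j) ≤ j * L / n :=
    Nat.findGreatest_spec (P := fun i => S i ≤ j * L / n) (Nat.zero_le k) (by rw [hS0]; positivity)
  have lower (j : ℕ) (hj : j ≤ n) : j * L / n - η ≤ S (m j) := by
    rcases (Nat.findGreatest_le (P := fun i => S i ≤ j * L / n) k).lt_or_eq with hlt | heq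
    · have hnext := Nat.findGreatest_is_greatest (Nat.lt_succ_self _) hlt
      push Not at hnext
      linarith [hstep _ hlt]
    · have : (j : ℝ) * L / n ≤ L := by
        rw [div_le_iff₀ hn']
        exact mul_le_mul_of_nonneg_right (by exact_mod_cast hj) hL |>.trans_eq (mul_comm _ _)
      change j * L / n - η ≤ S (Nat.findGreatest _ k)
      rw [heq]
      linarith
  refine ⟨m, fun a b hab => Nat.findGreatest_mono (fun i hi => hi.trans ?_) le_rfl, ?_, ?_, ?_⟩
  · gcongr
  · exact le_antisymm (by simpa using upper 0) (hS0 ▸ hS (Nat.zero_le _))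
  · exact Nat.findGreatest_eq (by rw [mul_div_cancel_left₀ _ hn'.ne'])
  · intro j hj
    have hlevel : ((j + 1 : ℕ) : ℝ) * L / n = j * L / n + L / n := by push_cast; ring
    linarith [upper (j + 1), lower j hj.le]

lemma exists_chain_dist_le_sum_div {X : Type*} [MetricSpace X] (z : ℕ → X) {k n : ℕ} (hn : 0 < n)
    {η : ℝ} (hη : 0 ≤ η) (hstep : ∀ i < k, dist (z i) (z (i + 1)) < η) :
    ∃ p : ℕ → X, p 0 = z 0 ∧ p n = z k ∧
      ∀ j < n, dist (p j) (p (j + 1)) ≤ (∑ i ∈ range k, dist (z i) (z (i + 1))) / n + η := by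
  set S : ℕ → ℝ := fun j => ∑ i ∈ range j, dist (z i) (z (i + 1))
  have hS : Monotone S := monotone_nat_of_le_succ fun j => by
    simp only [S, sum_range_succ, le_add_iff_nonneg_right, dist_nonneg]
  have hdist {a b : ℕ} (hab : a ≤ b) : dist (z a) (z b) ≤ S b - S a :=
    (dist_le_Ico_sum_dist z hab).trans_eq (sum_Ico_eq_sub _ hab)
  obtain ⟨m, hm, hm0, hmn, hmstep⟩ := hS.exists_reindex_sub_le (by simp [S]) hn hη
    fun i hi => by simpa [S, sum_range_succ, add_comm] using hstep i hi
  refine ⟨z ∘ m, ?_, congrArg z hmn, fun j hj => (hdist (hm j.le_succ)).trans (hmstep j hj)⟩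
  have : dist (z 0) (z (m 0)) ≤ 0 := by simpa [hm0, S] using hdist (Nat.zero_le (m 0))
  exact (dist_le_zero.1 this).symm

section HausdorffRange

variable {X ι : Type*} [PseudoMetricSpace X] {f g : ι → X} {ρ : ℝ}

lemma hausdorffDist_range_le_of_dist_le (hρ : 0 ≤ ρ) (h : ∀ i, dist (f i) (g i) ≤ ρ) :
    hausdorffDist (range f) (range g) ≤ ρ :=
  hausdorffDist_le_of_mem_dist hρ (forall_mem_range.2 fun i => ⟨g i, mem_range_self i, h i⟩)
    (forall_mem_range.2 fun i => ⟨f i, mem_range_self i, dist_comm (g i) (f i) ▸ h i⟩)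

lemma isBounded_range_of_dist_le (hf : IsBounded (range f)) (h : ∀ i, dist (f i) (g i) ≤ ρ) :
    IsBounded (range g) :=
  hf.cthickening.subset <| range_subset_iff.2 fun i =>
    mem_cthickening_of_dist_le (g i) (f i) ρ _ (mem_range_self i) (dist_comm (g i) (f i) ▸ h i)

end HausdorffRange

section HausdorffChainSelection

variable {X : Type*} [PseudoMetricSpace X] {A : ℕ → Set X} {k : ℕ} {x : X} {δ : ℝ}

lemma exists_seq_mem_dist_lt_hausdorffDist_add (hA : ∀ i ≤ k, (A i).Nonempty ∧ IsBounded (A i))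
    (hx : x ∈ A 0) (hδ : 0 < δ) :
    ∃ z : ℕ → X, z 0 = x ∧ (∀ i ≤ k, z i ∈ A i) ∧
      ∀ i < k, dist (z i) (z (i + 1)) < hausdorffDist (A i) (A (i + 1)) + δ := by
  have : Nonempty X := ⟨x⟩
  choose! next hnext_mem hnext_dist using fun i (hi : i < k) v (hv : v ∈ A i) =>
    exists_dist_lt_of_hausdorffDist_lt hv (lt_add_of_pos_right _ hδ)
      (hausdorffEDist_ne_top_of_nonempty_of_bounded (hA i hi.le).1 (hA (i + 1) hi).1
        (hA i hi.le).2 (hA (i + 1) hi).2)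
  let z : ℕ → X := fun i => Nat.rec (motive := fun _ => X) x next i
  have hz (i : ℕ) (hi : i ≤ k) : z i ∈ A i := by
    induction i with
    | zero => exact hx
    | succ i ih => exact hnext_mem i hi (z i) (ih (by omega))
  exact ⟨z, rfl, hz, fun i hi => hnext_dist i hi (z i) (hz i hi.le)⟩

lemma exists_seq_mem_sum_dist_lt_sum_hausdorffDist_add
    (hA : ∀ i ≤ k, (A i).Nonempty ∧ IsBounded (A i)) (hx : x ∈ A 0) (hδ : 0 < δ) :
    ∃ z : ℕ → X, z 0 = x ∧ (∀ i ≤ k, z i ∈ A i) ∧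
      (∀ i < k, dist (z i) (z (i + 1)) < hausdorffDist (A i) (A (i + 1)) + δ) ∧
      ∑ i ∈ range k, dist (z i) (z (i + 1)) <
        ∑ i ∈ range k, hausdorffDist (A i) (A (i + 1)) + δ := by
  have hk : (0 : ℝ) < k + 1 := by positivity
  obtain ⟨z, hz0, hzA, hz⟩ := exists_seq_mem_dist_lt_hausdorffDist_add hA hx (div_pos hδ hk)
  have hδk : δ / (k + 1) ≤ δ := div_le_self hδ.le (by linarith [k.cast_nonneg (α := ℝ)])
  refine ⟨z, hz0, hzA, fun i hi => (hz i hi).trans_le (add_le_add_right hδk _), ?_⟩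
  calc ∑ i ∈ range k, dist (z i) (z (i + 1))
      ≤ ∑ i ∈ range k, (hausdorffDist (A i) (A (i + 1)) + δ / (k + 1)) :=
        sum_le_sum fun i hi => (hz i (mem_range.1 hi)).le
    _ = ∑ i ∈ range k, hausdorffDist (A i) (A (i + 1)) + k * (δ / (k + 1)) := by
        rw [sum_add_distrib, sum_const, card_range, nsmul_eq_mul]
    _ < ∑ i ∈ range k, hausdorffDist (A i) (A (i + 1)) + δ := by
        have : k * (δ / (k + 1)) < δ := by rw [mul_div_assoc', div_lt_iff₀ hk]; linarith
        linarith

end HausdorffChainSelection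

namespace IntrinsicMetric

variable {X : Type*} [MetricSpace X] {M W : Set X} {n : ℕ} {δ : ℝ}

lemma exists_path_to_of_mem (hX : IntrinsicMetric X) {v : X} (hv : v ∈ M)
    (hfin : hausdorffEDist M W ≠ ⊤) (hn : 0 < n) (hδ : 0 < δ) :
    ∃ p : ℕ → X, p 0 = v ∧ p n ∈ W ∧
      ∀ j < n, dist (p j) (p (j + 1)) ≤ (hausdorffDist M W + δ) / n := by
  have hn' : (1 : ℝ) ≤ n := by exact_mod_cast hn
  obtain ⟨w, hw, hvw⟩ :=
    exists_dist_lt_of_hausdorffDist_lt hv (lt_add_of_pos_right _ (by positivity : 0 < δ / 3)) hfin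
  have hη : 0 < δ / 3 / n := by positivity
  obtain ⟨k, z, rfl, rfl, hstep, hsum⟩ := hX v w (δ / 3 / n) hη
  obtain ⟨p, hp0, hpn, hp⟩ := exists_chain_dist_le_sum_div z hn hη.le hstep
  refine ⟨p, hp0, hpn ▸ hw, fun j hj => (hp j hj).trans ?_⟩
  have hη_le : δ / 3 / n ≤ δ / 3 := div_le_self (by positivity) hn'
  rw [← add_div]
  exact div_le_div_of_nonneg_right (by linarith) (by positivity)

lemma exists_path_from_of_mem (hX : IntrinsicMetric X) {w : X} (hw : w ∈ W)
    (hfin : hausdorffEDist M W ≠ ⊤) (hn : 0 < n) (hδ : 0 < δ) :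
    ∃ p : ℕ → X, p 0 ∈ M ∧ p n = w ∧
      ∀ j < n, dist (p j) (p (j + 1)) ≤ (hausdorffDist M W + δ) / n := by
  obtain ⟨p, hp0, hpn, hp⟩ :=
    hX.exists_path_to_of_mem hw (by rwa [hausdorffEDist_comm]) hn hδ
  refine ⟨fun j => p (n - j), by simpa using hpn, by simpa using hp0, fun j hj => ?_⟩
  have hrev := hp (n - (j + 1)) (by omega)
  rw [show n - (j + 1) + 1 = n - j by omega, hausdorffDist_comm] at hrev
  rwa [dist_comm]

lemma exists_hausdorffDist_chain (hX : IntrinsicMetric X)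
    (hMne : M.Nonempty) (hMcl : IsClosed M) (hMb : IsBounded M)
    (hWne : W.Nonempty) (hWcl : IsClosed W) (hWb : IsBounded W) (hn : 0 < n) (hδ : 0 < δ) :
    ∃ A : ℕ → Set X, A 0 = M ∧ A n = W ∧
      (∀ j ≤ n, (A j).Nonempty ∧ IsClosed (A j) ∧ IsBounded (A j)) ∧
      ∀ j < n, hausdorffDist (A j) (A (j + 1)) ≤ (hausdorffDist M W + δ) / n := by
  have hfin := hausdorffEDist_ne_top_of_nonempty_of_bounded hMne hWne hMb hWb
  choose! p hp0 hpn hp using fun v (hv : v ∈ M) => hX.exists_path_to_of_mem hv hfin hn hδ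
  choose! q hq0 hqn hq using fun w (hw : w ∈ W) => hX.exists_path_from_of_mem hw hfin hn hδ
  set ρ := (hausdorffDist M W + δ) / n
  let γ (j : ℕ) : M ⊕ W → X := Sum.elim (fun v => p v j) (fun w => q w j)
  obtain ⟨v₀, hv₀⟩ := hMne
  have hγ (j : ℕ) (hj : j < n) (i : M ⊕ W) : dist (γ j i) (γ (j + 1) i) ≤ ρ := by
    rcases i with v | w
    exacts [hp v v.2 j hj, hq w w.2 j hj]
  have hγ0 : range (γ 0) = M := by
    refine (range_subset_iff.2 ?_).antisymm fun v hv => ⟨Sum.inl ⟨v, hv⟩, hp0 v hv⟩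
    rintro (v | w)
    exacts [by simp [γ, hp0 v v.2], hq0 w w.2]
  have hγn : range (γ n) = W := by
    refine (range_subset_iff.2 ?_).antisymm fun w hw => ⟨Sum.inr ⟨w, hw⟩, hqn w hw⟩
    rintro (v | w)
    exacts [hpn v v.2, by simp [γ, hqn w w.2]]
  have hbdd (j : ℕ) (hj : j ≤ n) : IsBounded (range (γ j)) := by
    induction j with
    | zero => rwa [hγ0]
    | succ j ih => exact isBounded_range_of_dist_le (ih (by omega)) (hγ j (by omega))
  let i₀ : M ⊕ W := Sum.inl ⟨v₀, hv₀⟩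
  refine ⟨fun j => closure (range (γ j)), by simp only [hγ0, hMcl.closure_eq],
    by simp only [hγn, hWcl.closure_eq],
    fun j hj => ⟨⟨_, subset_closure (mem_range_self i₀)⟩, isClosed_closure, (hbdd j hj).closure⟩,
    fun j hj => ?_⟩
  rw [hausdorffDist_closure]
  exact hausdorffDist_range_le_of_dist_le (dist_nonneg.trans (hγ j hj i₀)) (hγ j hj)

end IntrinsicMetric

/-- The Hausdorff metric on the collection of nonempty closed bounded subsets of `X`
is intrinsic iff the metric of `X` is intrinsic. -/
theorem hausdorff_intrinsic_iff_intrinsic {X : Type*} [MetricSpace X] :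
    (∀ M W : Set X, M.Nonempty → IsClosed M → IsBounded M →
      W.Nonempty → IsClosed W → IsBounded W →
      ∀ ε > (0 : ℝ), ∃ (k : ℕ) (A : ℕ → Set X),
        A 0 = M ∧ A k = W ∧
        (∀ i ≤ k, (A i).Nonempty ∧ IsClosed (A i) ∧ IsBounded (A i)) ∧
        (∀ i < k, hausdorffDist (A i) (A (i + 1)) < ε) ∧
        (∑ i ∈ Finset.range k, hausdorffDist (A i) (A (i + 1))) <
          hausdorffDist M W + ε) ↔
    (∀ x y : X, ∀ ε > (0 : ℝ), ∃ (k : ℕ) (z : ℕ → X), z 0 = x ∧ z k = y ∧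
      (∀ i < k, dist (z i) (z (i + 1)) < ε) ∧
      (∑ i ∈ Finset.range k, dist (z i) (z (i + 1))) < dist x y + ε) := by
  refine ⟨fun H x y ε hε => ?_,
    fun (hX : IntrinsicMetric X) M W hMne hMcl hMb hWne hWcl hWb ε hε => ?_⟩
  · obtain ⟨k, A, hA0, hAk, hA, hstep, hsum⟩ := H {x} {y} (singleton_nonempty x) isClosed_singleton
      isBounded_singleton (singleton_nonempty y) isClosed_singleton isBounded_singleton
      (ε / 2) (half_pos hε)
    obtain ⟨z, hz0, hzA, hz, hzsum⟩ := exists_seq_mem_sum_dist_lt_sum_hausdorffDist_add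
      (fun i hi => ⟨(hA i hi).1, (hA i hi).2.2⟩) (hA0 ▸ mem_singleton x) (half_pos hε)
    rw [hausdorffDist_singleton] at hsum
    exact ⟨k, z, hz0, by simpa [hAk] using hzA k le_rfl,
      fun i hi => by linarith [hz i hi, hstep i hi], by linarith⟩
  · set D := hausdorffDist M W
    obtain ⟨n, hn⟩ := exists_nat_gt ((D + ε / 2) / ε)
    have hD : 0 ≤ D := hausdorffDist_nonneg
    have hnD : D + ε / 2 < n * ε := (div_lt_iff₀ hε).1 hn
    have hn0 : 0 < n := by exact_mod_cast pos_of_mul_pos_left (by linarith : (0 : ℝ) < n * ε) hε.le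
    obtain ⟨A, hA0, hAn, hA, hstep⟩ :=
      hX.exists_hausdorffDist_chain hMne hMcl hMb hWne hWcl hWb hn0 (half_pos hε)
    have hρ : (D + ε / 2) / n < ε := by rw [div_lt_iff₀ (by exact_mod_cast hn0)]; linarith
    refine ⟨n, A, hA0, hAn, hA, fun j hj => (hstep j hj).trans_lt hρ, ?_⟩
    calc ∑ j ∈ range n, hausdorffDist (A j) (A (j + 1))
        ≤ ∑ _j ∈ range n, (D + ε / 2) / n := sum_le_sum fun j hj => hstep j (mem_range.1 hj)
      _ = D + ε / 2 := by
        rw [sum_const, card_range, nsmul_eq_mul, mul_div_cancel₀ _ (by positivity)]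
      _ < D + ε := by linarith
end

section
/- A metric space (X,d) is metrically convex — i.e., for all x, y ∈ X there exists z ∈ X with d(x,z) = d(z,y) = d(x,y)/2 — if and only if for every two nonempty bounded proximinal subsets M, W of X there exists a nonempty bounded subset Ω of X such that hausdorffDist(M,Ω) = hausdorffDist(Ω,W) = hausdorffDist(M,W)/2. -/
/-!
For two bounded sets `M`, `W` with `h = hausdorffDist M W`, the natural midpoint set is
`Ω = cthickening (h / 2) M ∩ cthickening (h / 2) W`. Proximinality of `W` gives each `m ∈ M` a
partner `w ∈ W` with `dist m w ≤ h`, and a metric midpoint of `m` and `w` lies in `Ω` within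
`h / 2` of `m`; symmetrically for `W`. Hence both Hausdorff distances to `Ω` are at most `h / 2`,
and the triangle inequality forces equality. Conversely, applying the hypothesis to `{x}` and `{y}`,
any point of the midpoint set is a metric midpoint of `x` and `y`.
-/

open Metric Bornology

section

variable {X : Type*} [PseudoMetricSpace X]

variable (X) in
def IsMetricallyConvex : Prop :=
  ∀ x y : X, ∃ z : X, dist x z = dist x y / 2 ∧ dist z y = dist x y / 2

def IsProximinal (M : Set X) : Prop :=
  ∀ x, ∃ y ∈ M, dist x y = infDist x M

theorem isProximinal_singleton (x : X) : IsProximinal ({x} : Set X) :=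
  fun _ => ⟨x, rfl, infDist_singleton.symm⟩

theorem IsProximinal.exists_dist_le_hausdorffDist {M W : Set X} (hW : IsProximinal W)
    (hfin : hausdorffEDist M W ≠ ⊤) {m : X} (hm : m ∈ M) :
    ∃ w ∈ W, dist m w ≤ hausdorffDist M W := by
  obtain ⟨w, hw, hdist⟩ := hW m
  exact ⟨w, hw, hdist ▸ infDist_le_hausdorffDist_of_mem hm hfin⟩

theorem infDist_le_of_mem_cthickening {δ : ℝ} {E : Set X} {x : X} (hδ : 0 ≤ δ)
    (hx : x ∈ cthickening δ E) : infDist x E ≤ δ :=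
  ENNReal.toReal_le_of_le_ofReal hδ hx

def hausdorffMidset (M W : Set X) : Set X :=
  cthickening (hausdorffDist M W / 2) M ∩ cthickening (hausdorffDist M W / 2) W

theorem hausdorffMidset_comm (M W : Set X) : hausdorffMidset M W = hausdorffMidset W M := by
  rw [hausdorffMidset, hausdorffMidset, hausdorffDist_comm, Set.inter_comm]

theorem Bornology.IsBounded.hausdorffMidset {M : Set X} (hM : IsBounded M) (W : Set X) :
    IsBounded (hausdorffMidset M W) :=
  hM.cthickening.subset Set.inter_subset_left

theorem exists_mem_hausdorffMidset_dist_le (hconv : IsMetricallyConvex X) {M W : Set X}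
    (hW : IsProximinal W) (hfin : hausdorffEDist M W ≠ ⊤) {m : X} (hm : m ∈ M) :
    ∃ z ∈ hausdorffMidset M W, dist m z ≤ hausdorffDist M W / 2 := by
  obtain ⟨w, hw, hmw⟩ := hW.exists_dist_le_hausdorffDist hfin hm
  obtain ⟨z, hmz, hzw⟩ := hconv m w
  have hmz' : dist m z ≤ hausdorffDist M W / 2 := by rw [hmz]; linarith
  have hzw' : dist z w ≤ hausdorffDist M W / 2 := by rw [hzw]; linarith
  exact ⟨z, ⟨mem_cthickening_of_dist_le z m _ M hm (dist_comm z m ▸ hmz'),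
    mem_cthickening_of_dist_le z w _ W hw hzw'⟩, hmz'⟩

theorem hausdorffMidset_nonempty (hconv : IsMetricallyConvex X) {M W : Set X}
    (hW : IsProximinal W) (hfin : hausdorffEDist M W ≠ ⊤) (hM : M.Nonempty) :
    (hausdorffMidset M W).Nonempty :=
  let ⟨z, hz, _⟩ := exists_mem_hausdorffMidset_dist_le hconv hW hfin hM.some_mem
  ⟨z, hz⟩

theorem hausdorffDist_hausdorffMidset_le (hconv : IsMetricallyConvex X) {M W : Set X}
    (hW : IsProximinal W) (hfin : hausdorffEDist M W ≠ ⊤) :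
    hausdorffDist M (hausdorffMidset M W) ≤ hausdorffDist M W / 2 := by
  have hh : 0 ≤ hausdorffDist M W / 2 := div_nonneg hausdorffDist_nonneg zero_le_two
  refine hausdorffDist_le_of_infDist hh (fun m hm => ?_)
    (fun z hz => infDist_le_of_mem_cthickening hh hz.1)
  obtain ⟨z, hz, hmz⟩ := exists_mem_hausdorffMidset_dist_le hconv hW hfin hm
  exact (infDist_le_dist_of_mem hz).trans hmz

theorem hausdorffDist_hausdorffMidset_le' (hconv : IsMetricallyConvex X) {M W : Set X}
    (hM : IsProximinal M) (hfin : hausdorffEDist M W ≠ ⊤) :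
    hausdorffDist (hausdorffMidset M W) W ≤ hausdorffDist M W / 2 := by
  rw [hausdorffMidset_comm, hausdorffDist_comm, hausdorffDist_comm (s := M)]
  exact hausdorffDist_hausdorffMidset_le hconv hM (hausdorffEDist_comm (s := M) ▸ hfin)

theorem exists_midpoint_of_hausdorffDist_singleton {x y : X} {Ω : Set X} (hΩ : Ω.Nonempty)
    (hΩb : IsBounded Ω) (hx : hausdorffDist {x} Ω = dist x y / 2)
    (hy : hausdorffDist Ω {y} = dist x y / 2) :
    ∃ z : X, dist x z = dist x y / 2 ∧ dist z y = dist x y / 2 := by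
  obtain ⟨z, hz⟩ := hΩ
  have hxz : dist z x ≤ hausdorffDist Ω {x} := infDist_singleton (x := z) ▸
    infDist_le_hausdorffDist_of_mem hz (hausdorffEDist_ne_top_of_nonempty_of_bounded ⟨z, hz⟩
      (Set.singleton_nonempty x) hΩb isBounded_singleton)
  have hzy : dist z y ≤ hausdorffDist Ω {y} := infDist_singleton (x := z) ▸
    infDist_le_hausdorffDist_of_mem hz (hausdorffEDist_ne_top_of_nonempty_of_bounded ⟨z, hz⟩
      (Set.singleton_nonempty y) hΩb isBounded_singleton)
  rw [hausdorffDist_comm, hx, dist_comm] at hxz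
  rw [hy] at hzy
  have := dist_triangle x z y
  exact ⟨z, by linarith, by linarith⟩

end

/-- A metric space is metrically convex iff every two nonempty bounded proximinal subsets
have a "midpoint" set with respect to the Hausdorff distance. -/
theorem metricallyConvex_iff_hausdorff_midpoints {X : Type*} [MetricSpace X] :
    (∀ x y : X, ∃ z : X, dist x z = dist x y / 2 ∧ dist z y = dist x y / 2) ↔
    (∀ M W : Set X,
      M.Nonempty → IsBounded M → (∀ x : X, ∃ y ∈ M, dist x y = infDist x M) →
      W.Nonempty → IsBounded W → (∀ x : X, ∃ y ∈ W, dist x y = infDist x W) →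
      ∃ Ω : Set X, Ω.Nonempty ∧ IsBounded Ω ∧
        hausdorffDist M Ω = hausdorffDist M W / 2 ∧
        hausdorffDist Ω W = hausdorffDist M W / 2) := by
  refine ⟨fun hconv M W hMne hMb hM hWne hWb hW => ?_, fun H x y => ?_⟩
  · have hfin := hausdorffEDist_ne_top_of_nonempty_of_bounded hMne hWne hMb hWb
    have hΩ := hausdorffMidset_nonempty hconv hW hfin hMne
    have hΩb := hMb.hausdorffMidset W
    have hMΩ := hausdorffDist_hausdorffMidset_le hconv hW hfin
    have hΩW := hausdorffDist_hausdorffMidset_le' hconv hM hfin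
    have htri : hausdorffDist M W ≤ hausdorffDist M (hausdorffMidset M W) +
        hausdorffDist (hausdorffMidset M W) W :=
      hausdorffDist_triangle (hausdorffEDist_ne_top_of_nonempty_of_bounded hMne hΩ hMb hΩb)
    exact ⟨_, hΩ, hΩb, by linarith, by linarith⟩
  · obtain ⟨Ω, hΩ, hΩb, hx, hy⟩ := H {x} {y} (Set.singleton_nonempty x) isBounded_singleton
      (isProximinal_singleton x) (Set.singleton_nonempty y) isBounded_singleton
      (isProximinal_singleton y)
    rw [hausdorffDist_singleton] at hx hy
    exact exists_midpoint_of_hausdorffDist_singleton hΩ hΩb hx hy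
end

section
/- Let (X,d) be a metric space with a midpoint map m satisfying m(x,y) = m(y,x) for all x,y and the Busemann non-positive curvature condition: 2·d(m(z,x), m(z,y)) ≤ d(x,y) for all x, y, z ∈ X. Then for all x, y, u, v ∈ X one has d(m(x,y), m(u,v)) ≤ hausdorffDist({x,y}, {u,v}) ≤ d(m(x,y), m(u,v)) + (d(x,y) + d(u,v))/2. -/
open Metric

lemma infDist_pair' {X : Type*} [MetricSpace X] (x u v : X) :
    infDist x ({u, v} : Set X) = min (dist x u) (dist x v) := by
  rw [infDist, Set.insert_eq, EMetric.infEdist_union, EMetric.infEdist_singleton,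
    EMetric.infEdist_singleton]
  simp [dist_edist, ENNReal.toReal_min, edist_ne_top]

/-- In a space with a symmetric midpoint map of Busemann non-positive curvature,
the distance between midpoints is bounded by the Hausdorff distance between the
corresponding two-point sets, which in turn is bounded by the distance between
the midpoints plus half the sum of the diameters. -/
theorem midpoint_hausdorffDist_estimates {X : Type*} [MetricSpace X]
    (m : X → X → X)
    (hmid : ∀ x y : X, dist x (m x y) = dist x y / 2 ∧ dist y (m x y) = dist x y / 2)
    (hsymm : ∀ x y : X, m x y = m y x)
    (hbus : ∀ x y z : X, 2 * dist (m z x) (m z y) ≤ dist x y)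
    (x y u v : X) :
    dist (m x y) (m u v) ≤ hausdorffDist ({x, y} : Set X) ({u, v} : Set X) ∧
    hausdorffDist ({x, y} : Set X) ({u, v} : Set X) ≤
      dist (m x y) (m u v) + (dist x y + dist u v) / 2 := by
  have fin : EMetric.hausdorffEdist ({x, y} : Set X) ({u, v} : Set X) ≠ ⊤ :=
    hausdorffEdist_ne_top_of_nonempty_of_bounded (by simp) (by simp)
      ((Set.toFinite _).isBounded) ((Set.toFinite _).isBounded)
  have hD : dist (m x y) (m u v) = dist (m x y) (m u v) := rfl
  -- two pairing bounds on D
  have hP1 : dist (m x y) (m u v) ≤ (dist x u + dist y v) / 2 := by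
    have h1 : 2 * dist (m x y) (m v x) ≤ dist y v := by rw [← hsymm x v]; exact hbus y v x
    have h2 : 2 * dist (m v x) (m v u) ≤ dist x u := hbus x u v
    have h3 : dist (m x y) (m u v) ≤ dist (m x y) (m v x) + dist (m v x) (m v u) := by
      rw [hsymm u v]; exact dist_triangle _ _ _
    linarith
  have hP2 : dist (m x y) (m u v) ≤ (dist x v + dist y u) / 2 := by
    have h1 : 2 * dist (m x y) (m u x) ≤ dist y u := by rw [← hsymm x u]; exact hbus y u x
    have h2 : 2 * dist (m u x) (m u v) ≤ dist x v := hbus x v u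
    have h3 := dist_triangle (m x y) (m u x) (m u v)
    linarith
  constructor
  · -- lower bound
    have hx : min (dist x u) (dist x v) ≤ hausdorffDist ({x, y} : Set X) ({u, v} : Set X) := by
      rw [← infDist_pair']
      exact infDist_le_hausdorffDist_of_mem (by simp) fin
    have hy : min (dist y u) (dist y v) ≤ hausdorffDist ({x, y} : Set X) ({u, v} : Set X) := by
      rw [← infDist_pair']
      exact infDist_le_hausdorffDist_of_mem (by simp) fin
    have hu : min (dist u x) (dist u y) ≤ hausdorffDist ({x, y} : Set X) ({u, v} : Set X) := by
      rw [← infDist_pair', hausdorffDist_comm]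
      exact infDist_le_hausdorffDist_of_mem (by simp)
        (by rwa [EMetric.hausdorffEdist_comm])
    have hv : min (dist v x) (dist v y) ≤ hausdorffDist ({x, y} : Set X) ({u, v} : Set X) := by
      rw [← infDist_pair', hausdorffDist_comm]
      exact infDist_le_hausdorffDist_of_mem (by simp)
        (by rwa [EMetric.hausdorffEdist_comm])
    rw [dist_comm u x, dist_comm u y] at hu
    rw [dist_comm v x, dist_comm v y] at hv
    rcases min_le_iff.1 hx with h | h <;> rcases min_le_iff.1 hy with h' | h' <;>
      rcases min_le_iff.1 hu with h'' | h'' <;> rcases min_le_iff.1 hv with h''' | h''' <;>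
      linarith
  · -- upper bound
    have key : ∀ p q : X, dist p (m p q) = dist p q / 2 := fun p q => (hmid p q).1
    have key2 : ∀ p q : X, dist q (m p q) = dist p q / 2 := fun p q => (hmid p q).2
    have hr : (0:ℝ) ≤ dist (m x y) (m u v) + (dist x y + dist u v) / 2 := by
      have := dist_nonneg (x := m x y) (y := m u v)
      have := dist_nonneg (x := x) (y := y)
      have := dist_nonneg (x := u) (y := v)
      linarith
    apply hausdorffDist_le_of_infDist hr
    · intro p hp
      have hpm : dist p (m x y) = dist x y / 2 := by
        rcases hp with h | h
        · rw [h]; exact key x y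
        · rw [Set.mem_singleton_iff] at h; rw [h]; exact key2 x y
      have h1 : infDist p ({u, v} : Set X) ≤ dist p u := by
        rw [infDist_pair']; exact min_le_left _ _
      have h2 : dist p u ≤ dist p (m x y) + dist (m x y) (m u v) + dist (m u v) u := by
        have := dist_triangle p (m x y) u
        have := dist_triangle (m x y) (m u v) u
        linarith
      have h3 : dist (m u v) u = dist u v / 2 := by rw [dist_comm]; exact key u v
      linarith
    · intro p hp
      have hpm : dist p (m u v) = dist u v / 2 := by
        rcases hp with h | h
        · rw [h]; exact key u v
        · rw [Set.mem_singleton_iff] at h; rw [h]; exact key2 u v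
      have h1 : infDist p ({x, y} : Set X) ≤ dist p x := by
        rw [infDist_pair']; exact min_le_left _ _
      have h2 : dist p x ≤ dist p (m u v) + dist (m u v) (m x y) + dist (m x y) x := by
        have := dist_triangle p (m u v) x
        have := dist_triangle (m u v) (m x y) x
        linarith
      have h3 : dist (m x y) x = dist x y / 2 := by rw [dist_comm]; exact key x y
      have h4 : dist (m u v) (m x y) = dist (m x y) (m u v) := dist_comm _ _
      linarith
end

section
/- Let E be a real normed vector space that is strictly convex (StrictConvexSpace ℝ E), let 0 < r₁ < r and k > 0 be real numbers, and let x, y lie in the closed ball of radius r₁ centered at 0, with x ≠ y. Suppose a, b ∈ E satisfy ‖a‖ = r, ‖b‖ = r, a = y + s·(x − y) for some real s ≥ 1, and b = x + t·(y − x) for some real t ≥ 1 (so a and b are the intersection points of the line through x and y with the sphere of radius r, with x between y and a, and y between x and b). Then k·(r − r₁)·‖x − y‖/(r + r₁)² ≤ (k/2)·log((‖x − b‖·‖y − a‖)/(‖x − a‖·‖y − b‖)) ≤ k·r·‖x − y‖/(r − r₁)². -/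
/-!
Write `d = ‖x - y‖`. Since `x` lies between `y` and `a`, we have `‖y - a‖ = ‖x - a‖ + d`, so the
factor `‖y - a‖ / ‖x - a‖` of the cross-ratio is `(u + d) / u` with `u = ‖x - a‖`, and
`d / (u + d) ≤ log ((u + d) / u) ≤ d / u`. The triangle inequality gives
`r - r₁ ≤ u` and `u + d ≤ r + r₁`, so the logarithm lies between `d / (r + r₁)` and
`d / (r - r₁)`; the same holds for the factor coming from `b`, and adding the two gives the claim.
-/

open Metric

namespace Real

theorem div_add_le_log_add_div {u d : ℝ} (hu : 0 < u) (hd : 0 ≤ d) :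
    d / (u + d) ≤ log ((u + d) / u) := by
  have h := one_sub_inv_le_log_of_pos (show 0 < (u + d) / u by positivity)
  rwa [inv_div, one_sub_div (by positivity), add_sub_cancel_left] at h

theorem log_add_div_le_div {u d : ℝ} (hu : 0 < u) (hd : 0 ≤ d) :
    log ((u + d) / u) ≤ d / u := by
  have h := log_le_sub_one_of_pos (show 0 < (u + d) / u by positivity)
  rwa [div_sub_one hu.ne', add_sub_cancel_left] at h

end Real

section

variable {E : Type*} [NormedAddCommGroup E] [NormedSpace ℝ E]

theorem norm_sub_eq_norm_sub_add_norm_sub_of_eq_add_smul {x y a : E} {s : ℝ} (hs : 1 ≤ s)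
    (has : a = y + s • (x - y)) : ‖y - a‖ = ‖x - a‖ + ‖x - y‖ := by
  have hya : y - a = (-s) • (x - y) := by rw [has]; module
  have hxa : x - a = (1 - s) • (x - y) := by rw [has]; module
  rw [hya, hxa, norm_smul, norm_smul, Real.norm_eq_abs, Real.norm_eq_abs, abs_neg,
    abs_of_nonneg (by linarith), abs_of_nonpos (by linarith)]
  ring

theorem log_norm_sub_div_norm_sub_mem_Icc {r r₁ : ℝ} (hrr : r₁ < r) {x y a : E}
    (hx : ‖x‖ ≤ r₁) (hy : ‖y‖ ≤ r₁) (ha : ‖a‖ = r) {s : ℝ} (hs : 1 ≤ s)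
    (has : a = y + s • (x - y)) :
    Real.log (‖y - a‖ / ‖x - a‖) ∈ Set.Icc (‖x - y‖ / (r + r₁)) (‖x - y‖ / (r - r₁)) := by
  have hu_lower : r - r₁ ≤ ‖x - a‖ := by
    linarith [norm_sub_norm_le a x, norm_sub_rev a x]
  have hsum_upper : ‖x - a‖ + ‖x - y‖ ≤ r + r₁ := by
    linarith [norm_sub_le y a, norm_sub_eq_norm_sub_add_norm_sub_of_eq_add_smul hs has]
  have hu : 0 < ‖x - a‖ := by linarith
  rw [norm_sub_eq_norm_sub_add_norm_sub_of_eq_add_smul hs has]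
  constructor
  · calc ‖x - y‖ / (r + r₁) ≤ ‖x - y‖ / (‖x - a‖ + ‖x - y‖) := by gcongr
      _ ≤ _ := Real.div_add_le_log_add_div hu (norm_nonneg _)
  · calc _ ≤ ‖x - y‖ / ‖x - a‖ := Real.log_add_div_le_div hu (norm_nonneg _)
      _ ≤ ‖x - y‖ / (r - r₁) := by gcongr

end

theorem hilbert_metric_estimates_general {E : Type*} [NormedAddCommGroup E] [NormedSpace ℝ E]
    (r r₁ k : ℝ) (hrr : r₁ < r) (hk : 0 < k)
    (x y : E) (hx : x ∈ closedBall (0 : E) r₁) (hy : y ∈ closedBall (0 : E) r₁)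
    (a b : E) (ha : ‖a‖ = r) (hb : ‖b‖ = r)
    (s t : ℝ) (hs : 1 ≤ s) (ht : 1 ≤ t)
    (has : a = y + s • (x - y)) (hbt : b = x + t • (y - x)) :
    k * (r - r₁) * ‖x - y‖ / (r + r₁) ^ 2 ≤
      (k / 2) * Real.log ((‖x - b‖ * ‖y - a‖) / (‖x - a‖ * ‖y - b‖)) ∧
    (k / 2) * Real.log ((‖x - b‖ * ‖y - a‖) / (‖x - a‖ * ‖y - b‖)) ≤
      k * r * ‖x - y‖ / (r - r₁) ^ 2 := by
  rw [mem_closedBall_zero_iff] at hx hy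
  have hr₁ : 0 ≤ r₁ := (norm_nonneg x).trans hx
  obtain ⟨ha_lower, ha_upper⟩ := log_norm_sub_div_norm_sub_mem_Icc hrr hx hy ha hs has
  obtain ⟨hb_lower, hb_upper⟩ := log_norm_sub_div_norm_sub_mem_Icc hrr hy hx hb ht hbt
  rw [norm_sub_rev y x] at hb_lower hb_upper
  have hne : ∀ {p c : E}, ‖p‖ ≤ r₁ → ‖c‖ = r → ‖p - c‖ ≠ 0 := fun {p c} hp hc => by
    linarith [norm_sub_norm_le c p, norm_sub_rev c p]
  rw [mul_comm ‖x - a‖, mul_div_mul_comm, Real.log_mul (div_ne_zero (hne hx hb) (hne hy hb))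
    (div_ne_zero (hne hy ha) (hne hx ha))]
  have hd := norm_nonneg (x - y)
  constructor
  · calc k * (r - r₁) * ‖x - y‖ / (r + r₁) ^ 2 ≤ k / 2 * (2 * (‖x - y‖ / (r + r₁))) := by
          rw [div_le_iff₀ (by nlinarith)]
          field_simp
          nlinarith [mul_nonneg hk.le hd]
      _ ≤ _ := by gcongr; linarith
  · calc _ ≤ k / 2 * (2 * (‖x - y‖ / (r - r₁))) := by gcongr; linarith
      _ ≤ k * r * ‖x - y‖ / (r - r₁) ^ 2 := by
          rw [le_div_iff₀ (by nlinarith)]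
          field_simp
          nlinarith [mul_nonneg hk.le hd]

/-- Estimates comparing the Hilbert metric of the open ball of radius `r` in a strictly
convex Banach space with the norm metric, on the closed ball of radius `r₁ < r`. -/
theorem hilbert_metric_estimates {E : Type*} [NormedAddCommGroup E] [NormedSpace ℝ E]
    [StrictConvexSpace ℝ E]
    (r r₁ k : ℝ) (hr₁ : 0 < r₁) (hrr : r₁ < r) (hk : 0 < k)
    (x y : E) (hx : x ∈ closedBall (0 : E) r₁) (hy : y ∈ closedBall (0 : E) r₁)
    (hxy : x ≠ y)
    (a b : E) (ha : ‖a‖ = r) (hb : ‖b‖ = r)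
    (s t : ℝ) (hs : 1 ≤ s) (ht : 1 ≤ t)
    (has : a = y + s • (x - y)) (hbt : b = x + t • (y - x)) :
    k * (r - r₁) * ‖x - y‖ / (r + r₁) ^ 2 ≤
      (k / 2) * Real.log ((‖x - b‖ * ‖y - a‖) / (‖x - a‖ * ‖y - b‖)) ∧
    (k / 2) * Real.log ((‖x - b‖ * ‖y - a‖) / (‖x - a‖ * ‖y - b‖)) ≤
      k * r * ‖x - y‖ / (r - r₁) ^ 2 :=
  hilbert_metric_estimates_general r r₁ k hrr hk x y hx hy a b ha hb s t hs ht has hbt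
end

section
/- Let (X,d) be a metric space and let M, W, A, B be nonempty bounded subsets of X. Then |R_W(M) − R_B(A)| ≤ max(β(M,A) + β(B,W), β(A,M) + β(W,B)), where R_W(M) = inf_{x∈W} sup_{y∈M} d(y,x) is the relative Chebyshev radius of M with respect to W and β(M,W) = sup_{x∈M} infDist(x,W) is the deviation of M from W. -/
open Metric Bornology

private lemma bddAbove_dist_image {X : Type*} [MetricSpace X] {M : Set X}
    (hMb : IsBounded M) (x : X) : BddAbove ((fun y => dist y x) '' M) := by
  obtain ⟨C, hC⟩ := hMb.subset_closedBall x
  exact ⟨C, by rintro _ ⟨y, hy, rfl⟩; simpa [dist_comm] using hC hy⟩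

private lemma bddAbove_infDist_image {X : Type*} [MetricSpace X] {M A : Set X}
    (hMb : IsBounded M) (hA : A.Nonempty) : BddAbove ((fun x => infDist x A) '' M) := by
  obtain ⟨a, ha⟩ := hA
  obtain ⟨C, hC⟩ := hMb.subset_closedBall a
  refine ⟨C, ?_⟩
  rintro _ ⟨y, hy, rfl⟩
  exact le_trans (infDist_le_dist_of_mem ha) (by simpa [dist_comm] using hC hy)

private lemma chebyshev_key {X : Type*} [MetricSpace X]
    (M W A B : Set X)
    (hM : M.Nonempty) (hMb : IsBounded M)
    (hW : W.Nonempty) (hWb : IsBounded W)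
    (hA : A.Nonempty) (hAb : IsBounded A)
    (hB : B.Nonempty) (hBb : IsBounded B) :
    sInf ((fun x => sSup ((fun y => dist y x) '' M)) '' W) ≤
      sInf ((fun x => sSup ((fun y => dist y x) '' A)) '' B) +
      (sSup ((fun x => infDist x A) '' M) + sSup ((fun x => infDist x W) '' B)) := by
  set βMA := sSup ((fun x => infDist x A) '' M)
  set βBW := sSup ((fun x => infDist x W) '' B)
  have hlb : BddBelow ((fun x => sSup ((fun y => dist y x) '' M)) '' W) := by
    refine ⟨0, ?_⟩
    rintro _ ⟨x, hx, rfl⟩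
    obtain ⟨m, hm⟩ := hM
    exact le_trans dist_nonneg (le_csSup (bddAbove_dist_image hMb x) ⟨m, hm, rfl⟩)
  -- main estimate: for each x in B,
  have main : ∀ x ∈ B, sInf ((fun x => sSup ((fun y => dist y x) '' M)) '' W) ≤
      sSup ((fun y => dist y x) '' A) + (βMA + βBW) := by
    intro x hx
    refine le_of_forall_pos_le_add ?_
    intro ε hε
    -- pick x' ∈ W close to x
    have hxW : infDist x W < βBW + ε/2 := by
      have : infDist x W ≤ βBW := le_csSup (bddAbove_infDist_image hBb hW) ⟨x, hx, rfl⟩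
      linarith
    obtain ⟨x', hx'W, hxx'⟩ := (infDist_lt_iff hW).1 hxW
    have h1 : sInf ((fun x => sSup ((fun y => dist y x) '' M)) '' W) ≤
        sSup ((fun y => dist y x') '' M) := csInf_le hlb ⟨x', hx'W, rfl⟩
    refine h1.trans ?_
    refine csSup_le (hM.image _) ?_
    rintro _ ⟨y, hy, rfl⟩
    have hyA : infDist y A < βMA + ε/2 := by
      have : infDist y A ≤ βMA := le_csSup (bddAbove_infDist_image hMb hA) ⟨y, hy, rfl⟩
      linarith
    obtain ⟨y', hy'A, hyy'⟩ := (infDist_lt_iff hA).1 hyA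
    have h2 : dist y' x ≤ sSup ((fun y => dist y x) '' A) :=
      le_csSup (bddAbove_dist_image hAb x) ⟨y', hy'A, rfl⟩
    calc dist y x' ≤ dist y y' + dist y' x + dist x x' := dist_triangle4 y y' x x'
      _ ≤ (βMA + ε/2) + sSup ((fun y => dist y x) '' A) + (βBW + ε/2) := by
          exact add_le_add (add_le_add hyy'.le h2) hxx'.le
      _ = sSup ((fun y => dist y x) '' A) + (βMA + βBW) + ε := by ring
  -- take inf over x ∈ B
  have : ∀ s ∈ (fun x => sSup ((fun y => dist y x) '' A)) '' B,
      sInf ((fun x => sSup ((fun y => dist y x) '' M)) '' W) - (βMA + βBW) ≤ s := by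
    rintro _ ⟨x, hx, rfl⟩
    linarith [main x hx]
  linarith [le_csInf (hB.image _) this]

/-- Estimate of the change of the relative Chebyshev radius `R_W(M)` under changes of the
nonempty bounded sets `M` and `W` of a metric space, in terms of the deviations `β`. -/
theorem relative_chebyshev_radius_estimate {X : Type*} [MetricSpace X]
    (M W A B : Set X)
    (hM : M.Nonempty) (hMb : IsBounded M)
    (hW : W.Nonempty) (hWb : IsBounded W)
    (hA : A.Nonempty) (hAb : IsBounded A)
    (hB : B.Nonempty) (hBb : IsBounded B) :
    |sInf ((fun x => sSup ((fun y => dist y x) '' M)) '' W) -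
      sInf ((fun x => sSup ((fun y => dist y x) '' A)) '' B)| ≤
    max (sSup ((fun x => infDist x A) '' M) + sSup ((fun x => infDist x W) '' B))
        (sSup ((fun x => infDist x M) '' A) + sSup ((fun x => infDist x B) '' W)) := by
  have h1 := chebyshev_key M W A B hM hMb hW hWb hA hAb hB hBb
  have h2 := chebyshev_key A B M W hA hAb hB hBb hM hMb hW hWb
  rw [abs_sub_le_iff]
  constructor
  · exact le_trans (by linarith) (le_max_left _ _)
  · exact le_trans (by linarith) (le_max_right _ _)
end

section
/- Let (X,d) be a metric space, let (Mₙ) be a sequence of nonempty compact subsets of X and let M be a nonempty compact subset of X with hausdorffDist(Mₙ, M) → 0. Then there exists a strictly increasing map φ : ℕ → ℕ such that sup_{z ∈ Z₀(M_{φ(n)})} infDist(z, Z₀(M)) → 0 as n → ∞, where for a nonempty compact K the set of its relative Chebyshev centers belonging to K is Z₀(K) = {x ∈ K : sup_{y∈K} d(y,x) = R₀(K)} with R₀(K) = inf_{x∈K} sup_{y∈K} d(y,x) (Z₀(K) is nonempty for compact K). -/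
open Metric Filter

/-!
The farthest-distance function `β(K, ·)` is `1`-Lipschitz and moves by at most
`hausdorffDist K K'` when `K` is replaced by `K'`; hence `R₀` is `2`-Lipschitz for the
Hausdorff distance. Pick `zₙ ∈ Z₀(Mₙ)` realising the deviation of `Z₀(Mₙ)` from
`Z₀(M)`. Since `zₙ` lies within `hausdorffDist Mₙ M` of the compact set `M`, a
subsequence converges to some `a ∈ M`, and passing to the limit in `β(Mₙ, zₙ) = R₀(Mₙ)`
gives `β(M, a) = R₀(M)`, i.e. `a ∈ Z₀(M)`.
-/

/-- The relative Chebyshev radius of a set `K` (with respect to `K` itself). -/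
noncomputable def chebR0 {X : Type*} [MetricSpace X] (K : Set X) : ℝ :=
  sInf ((fun x => sSup ((fun y => dist y x) '' K)) '' K)

/-- The set of relative Chebyshev centers of `K` belonging to `K`. -/
noncomputable def chebZ0 {X : Type*} [MetricSpace X] (K : Set X) : Set X :=
  {x ∈ K | sSup ((fun y => dist y x) '' K) = chebR0 K}

/-- `β(K, x)`; by `rfl`, `chebR0 K = sInf (farthestDist K '' K)` and
`chebZ0 K = {x ∈ K | farthestDist K x = chebR0 K}`. -/
noncomputable def farthestDist {X : Type*} [MetricSpace X] (K : Set X) (x : X) : ℝ :=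
  sSup ((fun y => dist y x) '' K)

section FarthestDist

variable {X : Type*} [MetricSpace X] {K K' : Set X} {x y : X}

theorem farthestDist_nonneg (K : Set X) (x : X) : 0 ≤ farthestDist K x :=
  Real.sSup_nonneg (by rintro _ ⟨y, -, rfl⟩; exact dist_nonneg)

theorem farthestDist_le {r : ℝ} (h : ∀ y ∈ K, dist y x ≤ r) (hr : 0 ≤ r) :
    farthestDist K x ≤ r :=
  Real.sSup_le (by rintro _ ⟨y, hy, rfl⟩; exact h y hy) hr

theorem dist_le_farthestDist (hK : Bornology.IsBounded K) (hy : y ∈ K) (x : X) :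
    dist y x ≤ farthestDist K x := by
  obtain ⟨r, hr⟩ := (isBounded_iff_subset_closedBall x).1 hK
  exact le_csSup ⟨r, by rintro _ ⟨z, hz, rfl⟩; exact hr hz⟩ ⟨y, hy, rfl⟩

theorem farthestDist_le_add_dist (hK : Bornology.IsBounded K) (x x' : X) :
    farthestDist K x ≤ farthestDist K x' + dist x' x :=
  farthestDist_le
    (fun y hy => (dist_triangle y x' x).trans
      (add_le_add_left (dist_le_farthestDist hK hy x') _))
    (add_nonneg (farthestDist_nonneg K x') dist_nonneg)

theorem lipschitzWith_farthestDist (hK : Bornology.IsBounded K) :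
    LipschitzWith 1 (farthestDist K) :=
  LipschitzWith.of_le_add fun x x' => dist_comm x x' ▸ farthestDist_le_add_dist hK x x'

theorem exists_dist_le_hausdorffDist (hK : Bornology.IsBounded K) (hK' : IsCompact K')
    (hK'ne : K'.Nonempty) (hy : y ∈ K) : ∃ y' ∈ K', dist y y' ≤ hausdorffDist K K' := by
  obtain ⟨y', hy', hdist⟩ := hK'.exists_infDist_eq_dist hK'ne y
  refine ⟨y', hy', hdist ▸ infDist_le_hausdorffDist_of_mem hy ?_⟩
  exact hausdorffEDist_ne_top_of_nonempty_of_bounded ⟨y, hy⟩ hK'ne hK hK'.isBounded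

theorem farthestDist_le_add_hausdorffDist (hK : Bornology.IsBounded K) (hK' : IsCompact K')
    (hK'ne : K'.Nonempty) (x : X) :
    farthestDist K x ≤ farthestDist K' x + hausdorffDist K K' := by
  refine farthestDist_le (fun y hy => ?_)
    (add_nonneg (farthestDist_nonneg K' x) hausdorffDist_nonneg)
  obtain ⟨y', hy', hyy'⟩ := exists_dist_le_hausdorffDist hK hK' hK'ne hy
  calc dist y x ≤ dist y y' + dist y' x := dist_triangle y y' x
    _ ≤ hausdorffDist K K' + farthestDist K' x :=
      add_le_add hyy' (dist_le_farthestDist hK'.isBounded hy' x)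
    _ = farthestDist K' x + hausdorffDist K K' := add_comm _ _

end FarthestDist

section ChebyshevCenters

variable {X : Type*} [MetricSpace X] {K K' : Set X} {x : X}

theorem chebR0_le_farthestDist (hx : x ∈ K) : chebR0 K ≤ farthestDist K x :=
  csInf_le ⟨0, by rintro _ ⟨y, -, rfl⟩; exact farthestDist_nonneg K y⟩ ⟨x, hx, rfl⟩

theorem chebZ0_nonempty (hK : IsCompact K) (hKne : K.Nonempty) : (chebZ0 K).Nonempty := by
  obtain ⟨x, hx, hmin⟩ := hK.exists_sInf_image_eq hKne
    (lipschitzWith_farthestDist hK.isBounded).continuous.continuousOn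
  exact ⟨x, hx, hmin.symm⟩

theorem isCompact_chebZ0 (hK : IsCompact K) : IsCompact (chebZ0 K) :=
  hK.inter_right <| isClosed_eq (lipschitzWith_farthestDist hK.isBounded).continuous
    continuous_const

theorem chebR0_le_add_two_mul_hausdorffDist (hK : IsCompact K) (hKne : K.Nonempty)
    (hK' : IsCompact K') (hK'ne : K'.Nonempty) :
    chebR0 K ≤ chebR0 K' + 2 * hausdorffDist K K' := by
  obtain ⟨x', hx'K', hx' : farthestDist K' x' = chebR0 K'⟩ := chebZ0_nonempty hK' hK'ne
  obtain ⟨x, hxK, hxx'⟩ := exists_dist_le_hausdorffDist hK'.isBounded hK hKne hx'K'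
  rw [hausdorffDist_comm] at hxx'
  calc chebR0 K ≤ farthestDist K x := chebR0_le_farthestDist hxK
    _ ≤ farthestDist K' x + hausdorffDist K K' :=
      farthestDist_le_add_hausdorffDist hK.isBounded hK' hK'ne x
    _ ≤ farthestDist K' x' + dist x' x + hausdorffDist K K' := by
      gcongr; exact farthestDist_le_add_dist hK'.isBounded x x'
    _ ≤ chebR0 K' + 2 * hausdorffDist K K' := by
      rw [hx']; linarith

theorem mem_chebZ0_of_tendsto {ι : Type*} {l : Filter ι} [l.NeBot] {Ks : ι → Set X}
    {xs : ι → X} {a : X} (hKs : ∀ i, IsCompact (Ks i)) (hK : IsCompact K)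
    (hconv : Tendsto (fun i => hausdorffDist (Ks i) K) l (nhds 0))
    (hxs : ∀ i, xs i ∈ chebZ0 (Ks i)) (hxa : Tendsto xs l (nhds a)) (ha : a ∈ K) :
    a ∈ chebZ0 K := by
  refine ⟨ha, le_antisymm ?_ (chebR0_le_farthestDist ha)⟩
  have hbound (i : ι) :
      farthestDist K a ≤ chebR0 K + (dist (xs i) a + 3 * hausdorffDist (Ks i) K) := by
    obtain ⟨hxK, hx : farthestDist (Ks i) (xs i) = chebR0 (Ks i)⟩ := hxs i
    calc farthestDist K a ≤ farthestDist K (xs i) + dist (xs i) a :=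
          farthestDist_le_add_dist hK.isBounded a (xs i)
      _ ≤ farthestDist (Ks i) (xs i) + hausdorffDist (Ks i) K + dist (xs i) a := by
          rw [hausdorffDist_comm]
          gcongr
          exact farthestDist_le_add_hausdorffDist hK.isBounded (hKs i) ⟨xs i, hxK⟩ (xs i)
      _ ≤ chebR0 K + (dist (xs i) a + 3 * hausdorffDist (Ks i) K) := by
          linarith [chebR0_le_add_two_mul_hausdorffDist (hKs i) ⟨xs i, hxK⟩ hK ⟨a, ha⟩]
  have herr : Tendsto (fun i => dist (xs i) a + 3 * hausdorffDist (Ks i) K) l (nhds 0) := by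
    simpa using (tendsto_iff_dist_tendsto_zero.1 hxa).add (hconv.const_mul 3)
  exact ge_of_tendsto (by simpa using tendsto_const_nhds.add herr) (Eventually.of_forall hbound)

end ChebyshevCenters

theorem exists_subseq_tendsto_of_hausdorffDist_tendsto {X : Type*} [MetricSpace X]
    {Ks : ℕ → Set X} {L : Set X} {xs : ℕ → X} (hKs : ∀ n, Bornology.IsBounded (Ks n))
    (hL : IsCompact L) (hLne : L.Nonempty)
    (hconv : Tendsto (fun n => hausdorffDist (Ks n) L) atTop (nhds 0))
    (hxs : ∀ n, xs n ∈ Ks n) :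
    ∃ a ∈ L, ∃ φ : ℕ → ℕ, StrictMono φ ∧ Tendsto (xs ∘ φ) atTop (nhds a) := by
  choose ys hysL hdist using fun n => exists_dist_le_hausdorffDist (hKs n) hL hLne (hxs n)
  obtain ⟨a, haL, φ, hφ, hya⟩ := hL.tendsto_subseq hysL
  refine ⟨a, haL, φ, hφ, hya.congr_dist ?_⟩
  refine squeeze_zero (fun _ => dist_nonneg) (fun n => ?_) (hconv.comp hφ.tendsto_atTop)
  exact (dist_comm _ _).trans_le (hdist (φ n))

/-- From any sequence of nonempty compact sets converging in the Hausdorff metric to a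
nonempty compact set `L` one can extract a subsequence for which the sets of relative
Chebyshev centers converge to `chebZ0 L` with respect to the Hausdorff deviation. -/
theorem chebyshev_centers_deviation_tendsto_zero {X : Type*} [MetricSpace X]
    (M : ℕ → Set X) (hMne : ∀ n, (M n).Nonempty) (hMc : ∀ n, IsCompact (M n))
    (L : Set X) (hLne : L.Nonempty) (hLc : IsCompact L)
    (hconv : Tendsto (fun n => hausdorffDist (M n) L) atTop (nhds 0)) :
    ∃ φ : ℕ → ℕ, StrictMono φ ∧
      Tendsto (fun n => sSup ((fun z => infDist z (chebZ0 L)) '' chebZ0 (M (φ n))))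
        atTop (nhds 0) := by
  choose z hz hsup using fun n => (isCompact_chebZ0 (hMc n)).exists_sSup_image_eq
    (chebZ0_nonempty (hMc n) (hMne n)) (continuous_infDist_pt (chebZ0 L)).continuousOn
  obtain ⟨a, haL, φ, hφ, hza⟩ := exists_subseq_tendsto_of_hausdorffDist_tendsto
    (fun n => (hMc n).isBounded) hLc hLne hconv (fun n => (hz n).1)
  have haZ : a ∈ chebZ0 L :=
    mem_chebZ0_of_tendsto (fun n => hMc (φ n)) hLc (hconv.comp hφ.tendsto_atTop)
      (fun n => hz (φ n)) hza haL
  refine ⟨φ, hφ, ?_⟩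
  simp_rw [hsup, ← infDist_zero_of_mem haZ]
  exact ((continuous_infDist_pt (chebZ0 L)).tendsto a).comp hza
end

section
/- Let (X,d) be a metric space with a midpoint map m satisfying: (A5) d(p, m(x,y)) ≤ max(d(p,x), d(p,y)) for all p, x, y ∈ X; and (A7) for every r > 0 and all bounded sequences (pₙ), (xₙ), (yₙ) in X with d(pₙ,xₙ) ≤ r and d(pₙ,yₙ) ≤ r for all n and d(pₙ, m(xₙ,yₙ)) → r, one has d(xₙ,yₙ) → 0. Then every nonempty bounded subset M of X has at most one Chebyshev center: if sup_{z∈M} d(z,x) = R(M) and sup_{z∈M} d(z,y) = R(M), where R(M) = inf_{p∈X} sup_{z∈M} d(z,p), then x = y. -/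
open Metric Bornology Filter

/-- In a metric space with a midpoint map satisfying conditions (A5) and (A7), every
nonempty bounded set has at most one Chebyshev center. -/
theorem chebyshev_center_unique {X : Type*} [MetricSpace X]
    (m : X → X → X)
    (hmid : ∀ x y : X, dist x (m x y) = dist x y / 2 ∧ dist y (m x y) = dist x y / 2)
    (hA5 : ∀ p x y : X, dist p (m x y) ≤ max (dist p x) (dist p y))
    (hA7 : ∀ r > (0 : ℝ), ∀ p x y : ℕ → X,
      IsBounded (Set.range p) → IsBounded (Set.range x) → IsBounded (Set.range y) →
      (∀ n, dist (p n) (x n) ≤ r) → (∀ n, dist (p n) (y n) ≤ r) →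
      Tendsto (fun n => dist (p n) (m (x n) (y n))) atTop (nhds r) →
      Tendsto (fun n => dist (x n) (y n)) atTop (nhds 0))
    (M : Set X) (hM : M.Nonempty) (hMb : IsBounded M)
    (x y : X)
    (hx : sSup ((fun z => dist z x) '' M) =
      sInf (Set.range fun p => sSup ((fun z => dist z p) '' M)))
    (hy : sSup ((fun z => dist z y) '' M) =
      sInf (Set.range fun p => sSup ((fun z => dist z p) '' M))) :
    x = y := by
  set β : X → ℝ := fun p => sSup ((fun z => dist z p) '' M) with hβ
  set R : ℝ := sInf (Set.range β) with hR
  have bdd : ∀ p : X, BddAbove ((fun z => dist z p) '' M) := by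
    intro p
    obtain ⟨C, hC⟩ := hMb.subset_closedBall p
    exact ⟨C, by rintro _ ⟨z, hz, rfl⟩; exact mem_closedBall.mp (hC hz)⟩
  have hle : ∀ p : X, ∀ z ∈ M, dist z p ≤ β p := by
    intro p z hz
    exact le_csSup (bdd p) ⟨z, hz, rfl⟩
  obtain ⟨z₀, hz₀⟩ := hM
  have hβ_nonneg : ∀ p : X, 0 ≤ β p := fun p =>
    le_trans dist_nonneg (hle p z₀ hz₀)
  have bddBelow_range : BddBelow (Set.range β) := by
    exact ⟨0, by rintro _ ⟨p, rfl⟩; exact hβ_nonneg p⟩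
  have hRle : ∀ p : X, R ≤ β p := fun p => csInf_le bddBelow_range ⟨p, rfl⟩
  have hR_nonneg : 0 ≤ R := by rw [← hx]; exact hβ_nonneg x
  rcases eq_or_lt_of_le hR_nonneg with hR0 | hRpos
  · -- R = 0
    have hxz : dist z₀ x ≤ 0 := by
      have := hle x z₀ hz₀
      rw [hβ] at this
      simpa [hx, ← hR0] using this
    have hyz : dist z₀ y ≤ 0 := by
      have := hle y z₀ hz₀
      rw [hβ] at this
      simpa [hy, ← hR0] using this
    have hx0 : z₀ = x := by
      have := le_antisymm hxz dist_nonneg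
      exact dist_eq_zero.mp this
    have hy0 : z₀ = y := by
      have := le_antisymm hyz dist_nonneg
      exact dist_eq_zero.mp this
    rw [← hx0, ← hy0]
  · -- R > 0
    set c := m x y with hc
    have hβx : β x = R := hx
    have hβy : β y = R := hy
    have hMne : ((fun z => dist z c) '' M).Nonempty := ⟨_, z₀, hz₀, rfl⟩
    have hβc_le : β c ≤ R := by
      apply csSup_le hMne
      rintro _ ⟨z, hz, rfl⟩
      refine le_trans (hA5 z x y) (max_le ?_ ?_)
      · exact (hle x z hz).trans hβx.le
      · exact (hle y z hz).trans hβy.le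
    have hβc : β c = R := le_antisymm hβc_le (hRle c)
    obtain ⟨u, -, hu_t, hu_mem⟩ := exists_seq_tendsto_sSup hMne (bdd c)
    have hp : ∀ n, ∃ z ∈ M, dist z c = u n := by
      intro n
      rcases hu_mem n with ⟨z, hz, hzu⟩
      exact ⟨z, hz, hzu⟩
    choose p hpM hpd using hp
    have hrange : IsBounded (Set.range p) :=
      hMb.subset (Set.range_subset_iff.mpr hpM)
    have hconst : ∀ w : X, IsBounded (Set.range fun _ : ℕ => w) := by
      intro w
      have : Set.range (fun _ : ℕ => w) ⊆ {w} := by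
        rintro _ ⟨n, rfl⟩; exact rfl
      exact (isBounded_singleton).subset this
    have htend : Tendsto (fun n => dist (p n) (m x y)) atTop (nhds R) := by
      have : (fun n => dist (p n) (m x y)) = u := by
        funext n; rw [← hpd n]
      rw [this, ← hβc]
      exact hu_t
    have := hA7 R hRpos p (fun _ => x) (fun _ => y) hrange (hconst x) (hconst y)
      (fun n => (hle x (p n) (hpM n)).trans hβx.le)
      (fun n => (hle y (p n) (hpM n)).trans hβy.le)
      htend
    have hd0 : dist x y = 0 := tendsto_nhds_unique tendsto_const_nhds this
    exact dist_eq_zero.mp hd0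
end

section
/- Let (X,d) be a complete metric space with a midpoint map m satisfying: (A5) d(p, m(x,y)) ≤ max(d(p,x), d(p,y)) for all p, x, y; (A6) for every closed ball B of X, m is uniformly continuous on B × B, i.e., for every ε > 0 there is δ > 0 such that for all x, y, x', y' ∈ B with d(x,x') < δ and d(y,y') < δ one has d(m(x,y), m(x',y')) < ε; and (A8) for every r > 0, every sequence (εₙ) of nonnegative reals converging to 0, and all bounded sequences (pₙ), (xₙ), (yₙ) in X with d(pₙ,xₙ) ≤ r + εₙ and d(pₙ,yₙ) ≤ r + εₙ for all n and d(pₙ, m(xₙ,yₙ)) → r, one has d(xₙ,yₙ) → 0. Then every nonempty bounded subset M of X has exactly one Chebyshev center: there is a unique x ∈ X with sup_{z∈M} d(z,x) = inf_{p∈X} sup_{z∈M} d(z,p). -/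
open Metric Bornology Filter

/-- In a complete metric space with a midpoint map satisfying conditions (A5), (A6) and
(A8), every nonempty bounded set has exactly one Chebyshev center. -/
theorem chebyshev_center_exists_unique {X : Type*} [MetricSpace X] [CompleteSpace X]
    (m : X → X → X)
    (hmid : ∀ x y : X, dist x (m x y) = dist x y / 2 ∧ dist y (m x y) = dist x y / 2)
    (hA5 : ∀ p x y : X, dist p (m x y) ≤ max (dist p x) (dist p y))
    (hA6 : ∀ (c : X) (ρ : ℝ), ∀ ε > (0 : ℝ), ∃ δ > (0 : ℝ),
      ∀ x ∈ closedBall c ρ, ∀ y ∈ closedBall c ρ,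
      ∀ x' ∈ closedBall c ρ, ∀ y' ∈ closedBall c ρ,
      dist x x' < δ → dist y y' < δ → dist (m x y) (m x' y') < ε)
    (hA8 : ∀ r > (0 : ℝ), ∀ ε : ℕ → ℝ, (∀ n, 0 ≤ ε n) →
      Tendsto ε atTop (nhds 0) →
      ∀ p x y : ℕ → X,
      IsBounded (Set.range p) → IsBounded (Set.range x) → IsBounded (Set.range y) →
      (∀ n, dist (p n) (x n) ≤ r + ε n) → (∀ n, dist (p n) (y n) ≤ r + ε n) →
      Tendsto (fun n => dist (p n) (m (x n) (y n))) atTop (nhds r) →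
      Tendsto (fun n => dist (x n) (y n)) atTop (nhds 0))
    (M : Set X) (hM : M.Nonempty) (hMb : IsBounded M) :
    ∃! x : X, sSup ((fun z => dist z x) '' M) =
      sInf (Set.range fun p => sSup ((fun z => dist z p) '' M)) := by
  classical
  let β : X → ℝ := fun x => sSup ((fun z => dist z x) '' M)
  let R : ℝ := sInf (Set.range β)
  show ∃! x : X, β x = R
  obtain ⟨z₀, hz₀⟩ := hM
  obtain ⟨C, hC⟩ := hMb.subset_closedBall z₀
  have hbdd : ∀ x : X, BddAbove ((fun z => dist z x) '' M) := by
    intro x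
    refine ⟨C + dist z₀ x, ?_⟩
    rintro _ ⟨z, hz, rfl⟩
    have h1 : dist z z₀ ≤ C := by simpa [Metric.mem_closedBall] using hC hz
    calc dist z x ≤ dist z z₀ + dist z₀ x := dist_triangle _ _ _
      _ ≤ C + dist z₀ x := by linarith
  have hne : ∀ x : X, ((fun z => dist z x) '' M).Nonempty :=
    fun x => ⟨_, ⟨z₀, hz₀, rfl⟩⟩
  have hle : ∀ x : X, ∀ z ∈ M, dist z x ≤ β x :=
    fun x z hz => le_csSup (hbdd x) ⟨z, hz, rfl⟩
  have hβle : ∀ x : X, ∀ b : ℝ, (∀ z ∈ M, dist z x ≤ b) → β x ≤ b := by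
    intro x b h
    exact csSup_le (hne x) (by rintro _ ⟨z, hz, rfl⟩; exact h z hz)
  have hβ0 : ∀ x : X, 0 ≤ β x := fun x => le_trans dist_nonneg (hle x z₀ hz₀)
  have hRbdd : BddBelow (Set.range β) := ⟨0, by rintro _ ⟨x, rfl⟩; exact hβ0 x⟩
  have hRle : ∀ x : X, R ≤ β x := fun x => csInf_le hRbdd ⟨x, rfl⟩
  have hR0 : 0 ≤ R := le_csInf ⟨β z₀, z₀, rfl⟩ (by rintro _ ⟨x, rfl⟩; exact hβ0 x)
  have hmax : ∀ x y : X, β (m x y) ≤ max (β x) (β y) := fun x y =>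
    hβle _ _ fun z hz => le_trans (hA5 z x y) (max_le_max (hle x z hz) (hle y z hz))
  have heps : Tendsto (fun n : ℕ => 1 / ((n : ℝ) + 1)) atTop (nhds 0) :=
    tendsto_one_div_add_atTop_nhds_zero_nat
  have hepspos : ∀ n : ℕ, (0:ℝ) < 1 / ((n : ℝ) + 1) := fun n => by positivity
  -- key: uniform uniqueness
  have key : ∀ ε > (0:ℝ), ∃ δ > (0:ℝ), ∀ x y : X, β x ≤ R + δ → β y ≤ R + δ →
      dist x y < ε := by
    intro ε hε
    rcases eq_or_lt_of_le hR0 with hR0' | hRpos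
    · refine ⟨ε/3, by linarith, fun x y hx hy => ?_⟩
      have h1 := hle x z₀ hz₀
      have h2 := hle y z₀ hz₀
      have h3 : dist x y ≤ dist z₀ x + dist z₀ y := by
        rw [dist_comm z₀ x]; exact dist_triangle x z₀ y
      linarith
    · by_contra hcon
      push_neg at hcon
      have hseq : ∀ n : ℕ, ∃ x y : X, β x ≤ R + 1 / ((n:ℝ) + 1) ∧
          β y ≤ R + 1 / ((n:ℝ) + 1) ∧ ε ≤ dist x y := by
        intro n
        obtain ⟨x, y, hx, hy, hxy⟩ := hcon _ (hepspos n)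
        exact ⟨x, y, hx, hy, hxy⟩
      choose x y hx hy hxy using hseq
      have hz : ∀ n : ℕ, ∃ z ∈ M,
          β (m (x n) (y n)) - 1 / ((n:ℝ) + 1) < dist z (m (x n) (y n)) := by
        intro n
        obtain ⟨a, ⟨z, hzM, rfl⟩, ha⟩ := exists_lt_of_lt_csSup (hne _)
          (show β (m (x n) (y n)) - 1 / ((n:ℝ) + 1) < β (m (x n) (y n)) from
            sub_lt_self _ (hepspos n))
        exact ⟨z, hzM, ha⟩
      choose z hzM hzd using hz
      have hβq : ∀ n : ℕ, β (m (x n) (y n)) ≤ R + 1 / ((n:ℝ) + 1) := fun n =>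
        le_trans (hmax _ _) (max_le (hx n) (hy n))
      have hupper : ∀ n : ℕ, dist (z n) (m (x n) (y n)) ≤ R + 1 / ((n:ℝ) + 1) := fun n =>
        le_trans (hle _ _ (hzM n)) (hβq n)
      have hlower : ∀ n : ℕ, R - 1 / ((n:ℝ) + 1) ≤ dist (z n) (m (x n) (y n)) := fun n =>
        le_trans (by linarith [hRle (m (x n) (y n))]) (hzd n).le
      have htendq : Tendsto (fun n => dist (z n) (m (x n) (y n))) atTop (nhds R) := by
        have h1 : Tendsto (fun n : ℕ => R - 1 / ((n:ℝ) + 1)) atTop (nhds R) := by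
          simpa using tendsto_const_nhds.sub heps
        have h2 : Tendsto (fun n : ℕ => R + 1 / ((n:ℝ) + 1)) atTop (nhds R) := by
          simpa using tendsto_const_nhds.add heps
        exact tendsto_of_tendsto_of_tendsto_of_le_of_le h1 h2 hlower hupper
      have hbz : IsBounded (Set.range z) :=
        hMb.subset (by rintro _ ⟨n, rfl⟩; exact hzM n)
      have hbx : IsBounded (Set.range x) := by
        refine (isBounded_closedBall (x := z₀) (r := R + 1)).subset ?_
        rintro _ ⟨n, rfl⟩
        rw [Metric.mem_closedBall, dist_comm]
        have : (1:ℝ) / ((n:ℝ) + 1) ≤ 1 := by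
          rw [div_le_one (by positivity)]; linarith [Nat.cast_nonneg (α := ℝ) n]
        linarith [hle (x n) z₀ hz₀, hx n]
      have hby : IsBounded (Set.range y) := by
        refine (isBounded_closedBall (x := z₀) (r := R + 1)).subset ?_
        rintro _ ⟨n, rfl⟩
        rw [Metric.mem_closedBall, dist_comm]
        have : (1:ℝ) / ((n:ℝ) + 1) ≤ 1 := by
          rw [div_le_one (by positivity)]; linarith [Nat.cast_nonneg (α := ℝ) n]
        linarith [hle (y n) z₀ hz₀, hy n]
      have hdzx : ∀ n : ℕ, dist (z n) (x n) ≤ R + 1 / ((n:ℝ) + 1) := fun n =>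
        le_trans (hle _ _ (hzM n)) (hx n)
      have hdzy : ∀ n : ℕ, dist (z n) (y n) ≤ R + 1 / ((n:ℝ) + 1) := fun n =>
        le_trans (hle _ _ (hzM n)) (hy n)
      have h0 := hA8 R hRpos _ (fun n => (hepspos n).le) heps z x y hbz hbx hby
        hdzx hdzy htendq
      have : ε ≤ 0 := ge_of_tendsto' h0 hxy
      linarith
  -- existence of minimizing sequence
  have hp : ∀ n : ℕ, ∃ p : X, β p < R + 1 / ((n:ℝ) + 1) := by
    intro n
    obtain ⟨a, ⟨p, rfl⟩, ha⟩ := exists_lt_of_csInf_lt ⟨β z₀, Set.mem_range_self z₀⟩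
      (show R < R + 1 / ((n:ℝ) + 1) from lt_add_of_pos_right _ (hepspos n))
    exact ⟨p, ha⟩
  choose p hpβ using hp
  have hcauchy : CauchySeq p := by
    rw [Metric.cauchySeq_iff]
    intro ε hε
    obtain ⟨δ, hδ, hkey⟩ := key ε hε
    obtain ⟨N, hN⟩ := exists_nat_gt (1 / δ)
    refine ⟨N, fun a ha b hb => ?_⟩
    have hbound : ∀ k : ℕ, N ≤ k → β (p k) ≤ R + δ := by
      intro k hk
      have h1 : 1 / ((k:ℝ) + 1) < δ := by
        rw [div_lt_iff₀ (by positivity)]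
        rw [div_lt_iff₀ hδ] at hN
        have : (N:ℝ) ≤ (k:ℝ) := Nat.cast_le.mpr hk
        nlinarith
      linarith [hpβ k]
    exact hkey _ _ (hbound a ha) (hbound b hb)
  obtain ⟨c, hc⟩ := cauchySeq_tendsto_of_complete hcauchy
  have hβc : β c = R := by
    refine le_antisymm ?_ (hRle c)
    have hLip : ∀ n : ℕ, β c ≤ R + 1 / ((n:ℝ) + 1) + dist (p n) c := by
      intro n
      refine le_trans (hβle c _ fun w hw => ?_) (by rfl)
      calc dist w c ≤ dist w (p n) + dist (p n) c := dist_triangle _ _ _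
        _ ≤ R + 1 / ((n:ℝ) + 1) + dist (p n) c := by
            linarith [hle (p n) w hw, hpβ n]
    have htend : Tendsto (fun n : ℕ => R + 1 / ((n:ℝ) + 1) + dist (p n) c)
        atTop (nhds R) := by
      have h1 : Tendsto (fun n => dist (p n) c) atTop (nhds 0) :=
        tendsto_iff_dist_tendsto_zero.mp hc
      simpa using (tendsto_const_nhds.add heps).add h1
    exact ge_of_tendsto' htend hLip
  refine ⟨c, hβc, fun w hw => ?_⟩
  by_contra hne'
  have hd : 0 < dist w c := dist_pos.mpr hne'
  obtain ⟨δ, hδ, hkey⟩ := key _ hd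
  exact absurd (hkey w c (by linarith [hw.le, hδ]) (by linarith [hβc.le, hδ]))
    (lt_irrefl _)
end

section
/- Let (X,d) be a metric space with a geodesic selection σ, and let m(x,y) = σ(x,y,1/2) be the induced midpoint map. Assume: (A5) d(p, m(x,y)) ≤ max(d(p,x), d(p,y)) for all p, x, y; (A6) for every closed ball B of X, m is uniformly continuous on B × B; and (A7) for every r > 0 and all bounded sequences (pₙ), (xₙ), (yₙ) in X with d(pₙ,xₙ) ≤ r and d(pₙ,yₙ) ≤ r for all n and d(pₙ, m(xₙ,yₙ)) → r, one has d(xₙ,yₙ) → 0. Then (A8) holds: for every r > 0, every sequence (εₙ) of nonnegative reals converging to 0, and all bounded sequences (pₙ), (xₙ), (yₙ) in X with d(pₙ,xₙ) ≤ r + εₙ and d(pₙ,yₙ) ≤ r + εₙ for all n and d(pₙ, m(xₙ,yₙ)) → r, one has d(xₙ,yₙ) → 0. -/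
open Metric Bornology Filter Set

/-- In a geodesic space (given by a geodesic selection) satisfying conditions (A5), (A6)
and (A7), condition (A8) holds as well. -/
theorem A8_of_A5_A6_A7 {X : Type*} [MetricSpace X]
    (σ : X → X → ℝ → X)
    (hσ0 : ∀ x y : X, σ x y 0 = x) (hσ1 : ∀ x y : X, σ x y 1 = y)
    (hσd : ∀ x y : X, ∀ s ∈ Icc (0 : ℝ) 1, ∀ t ∈ Icc (0 : ℝ) 1,
      dist (σ x y s) (σ x y t) = |s - t| * dist x y)
    (m : X → X → X) (hm : ∀ x y : X, m x y = σ x y (1 / 2))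
    (hA5 : ∀ p x y : X, dist p (m x y) ≤ max (dist p x) (dist p y))
    (hA6 : ∀ (c : X) (ρ : ℝ), ∀ ε > (0 : ℝ), ∃ δ > (0 : ℝ),
      ∀ x ∈ closedBall c ρ, ∀ y ∈ closedBall c ρ,
      ∀ x' ∈ closedBall c ρ, ∀ y' ∈ closedBall c ρ,
      dist x x' < δ → dist y y' < δ → dist (m x y) (m x' y') < ε)
    (hA7 : ∀ r > (0 : ℝ), ∀ p x y : ℕ → X,
      IsBounded (Set.range p) → IsBounded (Set.range x) → IsBounded (Set.range y) →
      (∀ n, dist (p n) (x n) ≤ r) → (∀ n, dist (p n) (y n) ≤ r) →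
      Tendsto (fun n => dist (p n) (m (x n) (y n))) atTop (nhds r) →
      Tendsto (fun n => dist (x n) (y n)) atTop (nhds 0)) :
    ∀ r > (0 : ℝ), ∀ ε : ℕ → ℝ, (∀ n, 0 ≤ ε n) → Tendsto ε atTop (nhds 0) →
      ∀ p x y : ℕ → X,
      IsBounded (Set.range p) → IsBounded (Set.range x) → IsBounded (Set.range y) →
      (∀ n, dist (p n) (x n) ≤ r + ε n) → (∀ n, dist (p n) (y n) ≤ r + ε n) →
      Tendsto (fun n => dist (p n) (m (x n) (y n))) atTop (nhds r) →
      Tendsto (fun n => dist (x n) (y n)) atTop (nhds 0) := by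
  intro r hr ε hε0 hεlim p x y hbp hbx hby hpx hpy hlim
  classical
  -- truncation map: move `b` towards `a` so that the distance to `a` is at most `r`
  set T : X → X → X := fun a b =>
    if dist a b ≤ r then b else σ a b (r / dist a b) with hT
  have key : ∀ a b : X, ¬ dist a b ≤ r →
      dist a (σ a b (r / dist a b)) = r ∧
      dist b (σ a b (r / dist a b)) = dist a b - r := by
    intro a b h
    have hd : r < dist a b := not_le.mp h
    have hd0 : (0 : ℝ) < dist a b := hr.trans hd
    have ht : r / dist a b ∈ Icc (0 : ℝ) 1 :=
      ⟨by positivity, by rw [div_le_one hd0]; exact hd.le⟩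
    have h0 : (0 : ℝ) ∈ Icc (0 : ℝ) 1 := ⟨le_refl 0, zero_le_one⟩
    have h1 : (1 : ℝ) ∈ Icc (0 : ℝ) 1 := ⟨zero_le_one, le_refl 1⟩
    constructor
    · have e := hσd a b 0 h0 (r / dist a b) ht
      rw [hσ0] at e
      rw [e, abs_of_nonpos (by linarith [ht.1] : (0 : ℝ) - r / dist a b ≤ 0), neg_sub,
        sub_zero, div_mul_cancel₀ r hd0.ne']
    · have e := hσd a b 1 h1 (r / dist a b) ht
      rw [hσ1] at e
      rw [e, abs_of_nonneg (by linarith [ht.2] : (0 : ℝ) ≤ 1 - r / dist a b), sub_mul,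
        one_mul, div_mul_cancel₀ r hd0.ne']
  have hTr : ∀ a b : X, dist a (T a b) ≤ r := by
    intro a b
    by_cases h : dist a b ≤ r
    · simp only [hT, if_pos h]; exact h
    · simp only [hT, if_neg h]; exact (key a b h).1.le
  have hTb : ∀ a b : X, dist b (T a b) ≤ max (dist a b - r) 0 := by
    intro a b
    by_cases h : dist a b ≤ r
    · simp only [hT, if_pos h, dist_self]; exact le_max_right _ _
    · simp only [hT, if_neg h, (key a b h).2]; exact le_max_left _ _
  set x' : ℕ → X := fun n => T (p n) (x n) with hx'
  set y' : ℕ → X := fun n => T (p n) (y n) with hy'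
  have hx'p : ∀ n, dist (p n) (x' n) ≤ r := fun n => hTr _ _
  have hy'p : ∀ n, dist (p n) (y' n) ≤ r := fun n => hTr _ _
  have hx'x : ∀ n, dist (x n) (x' n) ≤ ε n := by
    intro n
    refine (hTb (p n) (x n)).trans (max_le (by linarith [hpx n]) (hε0 n))
  have hy'y : ∀ n, dist (y n) (y' n) ≤ ε n := by
    intro n
    refine (hTb (p n) (y n)).trans (max_le (by linarith [hpy n]) (hε0 n))
  -- a common closed ball
  obtain ⟨ρp, hρp⟩ := hbp.subset_closedBall (p 0)
  obtain ⟨ρx, hρx⟩ := hbx.subset_closedBall (p 0)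
  obtain ⟨ρy, hρy⟩ := hby.subset_closedBall (p 0)
  set c : X := p 0 with hc
  set ρ : ℝ := max (max ρp ρx) (max ρy 0) with hρ
  have hpc : ∀ n, dist (p n) c ≤ ρ :=
    fun n => le_trans (hρp (mem_range_self n)) (le_max_of_le_left (le_max_left _ _))
  have hxc : ∀ n, dist (x n) c ≤ ρ :=
    fun n => le_trans (hρx (mem_range_self n)) (le_max_of_le_left (le_max_right _ _))
  have hyc : ∀ n, dist (y n) c ≤ ρ :=
    fun n => le_trans (hρy (mem_range_self n)) (le_max_of_le_right (le_max_left _ _))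
  have hρ0 : (0 : ℝ) ≤ ρ := le_max_of_le_right (le_max_right _ _)
  have hx'c : ∀ n, dist (x' n) c ≤ ρ + r := by
    intro n
    calc dist (x' n) c ≤ dist (x' n) (p n) + dist (p n) c := dist_triangle _ _ _
      _ ≤ r + ρ := add_le_add (by rw [dist_comm]; exact hx'p n) (hpc n)
      _ = ρ + r := by ring
  have hy'c : ∀ n, dist (y' n) c ≤ ρ + r := by
    intro n
    calc dist (y' n) c ≤ dist (y' n) (p n) + dist (p n) c := dist_triangle _ _ _
      _ ≤ r + ρ := add_le_add (by rw [dist_comm]; exact hy'p n) (hpc n)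
      _ = ρ + r := by ring
  have hbx' : IsBounded (Set.range x') :=
    (isBounded_closedBall (x := c) (r := ρ + r)).subset
      (range_subset_iff.mpr fun n => mem_closedBall.mpr (hx'c n))
  have hby' : IsBounded (Set.range y') :=
    (isBounded_closedBall (x := c) (r := ρ + r)).subset
      (range_subset_iff.mpr fun n => mem_closedBall.mpr (hy'c n))
  -- distance between the midpoints tends to 0 by (A6)
  have hmm : Tendsto (fun n => dist (m (x n) (y n)) (m (x' n) (y' n))) atTop (nhds 0) := by
    rw [Metric.tendsto_atTop]
    intro e he
    obtain ⟨δ, hδ, hδm⟩ := hA6 c (ρ + r) e he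
    obtain ⟨N, hN⟩ := Filter.eventually_atTop.mp (hεlim.eventually (gt_mem_nhds hδ))
    refine ⟨N, fun n hn => ?_⟩
    have hmem1 : x n ∈ closedBall c (ρ + r) :=
      mem_closedBall.mpr ((hxc n).trans (by linarith))
    have hmem2 : y n ∈ closedBall c (ρ + r) :=
      mem_closedBall.mpr ((hyc n).trans (by linarith))
    have hmem3 : x' n ∈ closedBall c (ρ + r) := mem_closedBall.mpr (hx'c n)
    have hmem4 : y' n ∈ closedBall c (ρ + r) := mem_closedBall.mpr (hy'c n)
    have h1 : dist (x n) (x' n) < δ := lt_of_le_of_lt (hx'x n) (hN n hn)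
    have h2 : dist (y n) (y' n) < δ := lt_of_le_of_lt (hy'y n) (hN n hn)
    have := hδm (x n) hmem1 (y n) hmem2 (x' n) hmem3 (y' n) hmem4 h1 h2
    rw [Real.dist_eq, sub_zero, abs_of_nonneg dist_nonneg]
    exact this
  -- hence dist (p n) (m (x' n) (y' n)) → r
  have hlim' : Tendsto (fun n => dist (p n) (m (x' n) (y' n))) atTop (nhds r) := by
    have hlo : Tendsto (fun n => dist (p n) (m (x n) (y n)) -
        dist (m (x n) (y n)) (m (x' n) (y' n))) atTop (nhds r) := by
      simpa using hlim.sub hmm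
    have hhi : Tendsto (fun n => dist (p n) (m (x n) (y n)) +
        dist (m (x n) (y n)) (m (x' n) (y' n))) atTop (nhds r) := by
      simpa using hlim.add hmm
    refine tendsto_of_tendsto_of_tendsto_of_le_of_le hlo hhi (fun n => ?_) (fun n => ?_)
    · have := dist_triangle (p n) (m (x' n) (y' n)) (m (x n) (y n))
      rw [dist_comm (m (x' n) (y' n)) (m (x n) (y n))] at this
      linarith
    · have := dist_triangle (p n) (m (x n) (y n)) (m (x' n) (y' n))
      linarith
  -- by (A7), dist (x' n) (y' n) → 0
  have h7 := hA7 r hr p x' y' hbp hbx' hby' hx'p hy'p hlim'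
  -- conclude
  have hupper : ∀ n, dist (x n) (y n) ≤ ε n + dist (x' n) (y' n) + ε n := by
    intro n
    calc dist (x n) (y n) ≤ dist (x n) (x' n) + dist (x' n) (y' n) + dist (y' n) (y n) :=
          dist_triangle4 _ _ _ _
      _ ≤ ε n + dist (x' n) (y' n) + ε n := by
          have := hy'y n
          rw [dist_comm (y' n) (y n)]
          exact add_le_add (add_le_add (hx'x n) le_rfl) this
  have hg : Tendsto (fun n => ε n + dist (x' n) (y' n) + ε n) atTop (nhds 0) := by
    simpa using (hεlim.add h7).add hεlim
  exact squeeze_zero (fun n => dist_nonneg) hupper hg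
end

section
/- Let (X,d) be a complete metric space with a geodesic selection σ, let m(x,y) = σ(x,y,1/2), and assume: (A5) d(p, m(x,y)) ≤ max(d(p,x), d(p,y)) for all p, x, y; (A6) for every closed ball B of X, m is uniformly continuous on B × B; and (A'7) for every closed ball closedBall(p,r) with r > 0 and all sequences (xₙ), (yₙ) in closedBall(p,r) with d(p, m(xₙ,yₙ)) → r, one has d(xₙ,yₙ) → 0. Then every nonempty closed subset M of X that is convex with respect to σ (i.e., σ(x,y,t) ∈ M for all x, y ∈ M and t ∈ [0,1]) is approximatively compact and Chebyshev: (a) for every x ∈ X, every sequence (yₙ) in M with d(x,yₙ) → infDist(x,M) has a subsequence converging to a point of M; and (b) for every x ∈ X there exists a unique y ∈ M with d(x,y) = infDist(x,M). -/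
open Metric Bornology Filter Set

/-- In a complete geodesic space satisfying conditions (A5), (A6) and (A'7), every
nonempty closed convex set is approximatively compact and Chebyshev. -/
theorem convex_closed_approx_compact_chebyshev {X : Type*} [MetricSpace X]
    [CompleteSpace X]
    (σ : X → X → ℝ → X)
    (hσ0 : ∀ x y : X, σ x y 0 = x) (hσ1 : ∀ x y : X, σ x y 1 = y)
    (hσd : ∀ x y : X, ∀ s ∈ Icc (0 : ℝ) 1, ∀ t ∈ Icc (0 : ℝ) 1,
      dist (σ x y s) (σ x y t) = |s - t| * dist x y)
    (m : X → X → X) (hm : ∀ x y : X, m x y = σ x y (1 / 2))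
    (hA5 : ∀ p x y : X, dist p (m x y) ≤ max (dist p x) (dist p y))
    (hA6 : ∀ (c : X) (ρ : ℝ), ∀ ε > (0 : ℝ), ∃ δ > (0 : ℝ),
      ∀ x ∈ closedBall c ρ, ∀ y ∈ closedBall c ρ,
      ∀ x' ∈ closedBall c ρ, ∀ y' ∈ closedBall c ρ,
      dist x x' < δ → dist y y' < δ → dist (m x y) (m x' y') < ε)
    (hA7' : ∀ (p : X), ∀ r > (0 : ℝ), ∀ x y : ℕ → X,
      (∀ n, x n ∈ closedBall p r) → (∀ n, y n ∈ closedBall p r) →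
      Tendsto (fun n => dist p (m (x n) (y n))) atTop (nhds r) →
      Tendsto (fun n => dist (x n) (y n)) atTop (nhds 0))
    (M : Set X) (hMne : M.Nonempty) (hMcl : IsClosed M)
    (hMconv : ∀ x ∈ M, ∀ y ∈ M, ∀ t ∈ Icc (0 : ℝ) 1, σ x y t ∈ M) :
    (∀ x : X, ∀ y : ℕ → X, (∀ n, y n ∈ M) →
      Tendsto (fun n => dist x (y n)) atTop (nhds (infDist x M)) →
      ∃ (z : X) (φ : ℕ → ℕ), z ∈ M ∧ StrictMono φ ∧
        Tendsto (fun n => y (φ n)) atTop (nhds z)) ∧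
    (∀ x : X, ∃! y : X, y ∈ M ∧ dist x y = infDist x M) := by
  -- midpoints of points of M stay in M
  have hmem : ∀ x ∈ M, ∀ y ∈ M, m x y ∈ M := by
    intro x hx y hy
    rw [hm]
    exact hMconv x hx y hy (1 / 2) ⟨by norm_num, by norm_num⟩
  -- key step: minimizing sequences are Cauchy when infDist > 0
  have hcauchy : ∀ (x : X) (y : ℕ → X), (∀ n, y n ∈ M) → 0 < infDist x M →
      Tendsto (fun n => dist x (y n)) atTop (nhds (infDist x M)) → CauchySeq y := by
    intro x y hyM hr hty
    set r := infDist x M with hrdef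
    have hry : ∀ n, r ≤ dist x (y n) := fun n => infDist_le_dist_of_mem (hyM n)
    have hdpos : ∀ n, 0 < dist x (y n) := fun n => lt_of_lt_of_le hr (hry n)
    set z : ℕ → X := fun n => σ x (y n) (r / dist x (y n)) with hzdef
    have htIcc : ∀ n, r / dist x (y n) ∈ Icc (0 : ℝ) 1 := fun n =>
      ⟨div_nonneg hr.le dist_nonneg, (div_le_one (hdpos n)).2 (hry n)⟩
    have hdz : ∀ n, dist x (z n) = r := by
      intro n
      calc dist x (z n) = dist (σ x (y n) 0) (σ x (y n) (r / dist x (y n))) := by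
            rw [hσ0]
        _ = |0 - r / dist x (y n)| * dist x (y n) :=
            hσd _ _ 0 ⟨le_refl 0, zero_le_one⟩ _ (htIcc n)
        _ = r := by
            rw [zero_sub, abs_neg, abs_of_nonneg (htIcc n).1,
              div_mul_cancel₀ _ (hdpos n).ne']
    have hzy : ∀ n, dist (z n) (y n) = dist x (y n) - r := by
      intro n
      calc dist (z n) (y n)
          = dist (σ x (y n) (r / dist x (y n))) (σ x (y n) 1) := by rw [hσ1]
        _ = |r / dist x (y n) - 1| * dist x (y n) :=
            hσd _ _ _ (htIcc n) 1 ⟨zero_le_one, le_refl 1⟩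
        _ = dist x (y n) - r := by
            rw [abs_of_nonpos (by linarith [(htIcc n).2]), neg_sub, sub_mul, one_mul,
              div_mul_cancel₀ _ (hdpos n).ne']
    have hzb : ∀ n, z n ∈ closedBall x r := by
      intro n
      rw [mem_closedBall, dist_comm, hdz n]
    have hzy0 : Tendsto (fun n => dist (z n) (y n)) atTop (nhds 0) := by
      have h := hty.sub_const r
      rw [sub_self] at h
      simpa only [hzy] using h
    obtain ⟨C, hC⟩ := hty.bddAbove_range
    have hC' : ∀ n, dist x (y n) ≤ C := fun n => hC ⟨n, rfl⟩
    have hrC : r ≤ C := le_trans (hry 0) (hC' 0)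
    have hyB : ∀ n, y n ∈ closedBall x C := fun n => by
      rw [mem_closedBall, dist_comm]; exact hC' n
    have hzB : ∀ n, z n ∈ closedBall x C := fun n => by
      rw [mem_closedBall, dist_comm, hdz n]; exact hrC
    by_contra hnc
    rw [Metric.cauchySeq_iff] at hnc
    push_neg at hnc
    obtain ⟨ε, hε, hN⟩ := hnc
    choose a ha b hb hab using hN
    have hta : Tendsto a atTop atTop := tendsto_atTop_mono ha tendsto_id
    have htb : Tendsto b atTop atTop := tendsto_atTop_mono hb tendsto_id
    have htya : Tendsto (fun N => dist x (y (a N))) atTop (nhds r) := hty.comp hta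
    have htyb : Tendsto (fun N => dist x (y (b N))) atTop (nhds r) := hty.comp htb
    -- dist x (m (y aN) (y bN)) → r
    have h1 : Tendsto (fun N => dist x (m (y (a N)) (y (b N)))) atTop (nhds r) := by
      have hmax : Tendsto (fun N => max (dist x (y (a N))) (dist x (y (b N))))
          atTop (nhds r) := by
        have := htya.max htyb
        simpa using this
      exact tendsto_of_tendsto_of_tendsto_of_le_of_le tendsto_const_nhds hmax
        (fun N => infDist_le_dist_of_mem (hmem _ (hyM _) _ (hyM _)))
        (fun N => hA5 _ _ _)
    -- dist (m (y aN) (y bN)) (m (z aN) (z bN)) → 0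
    have hza0 : Tendsto (fun N => dist (z (a N)) (y (a N))) atTop (nhds 0) :=
      hzy0.comp hta
    have hzb0 : Tendsto (fun N => dist (z (b N)) (y (b N))) atTop (nhds 0) :=
      hzy0.comp htb
    have h2 : Tendsto (fun N => dist (m (y (a N)) (y (b N))) (m (z (a N)) (z (b N))))
        atTop (nhds 0) := by
      rw [NormedAddCommGroup.tendsto_nhds_zero]
      intro ε' hε'
      obtain ⟨δ, hδ, hδ'⟩ := hA6 x C ε' hε'
      filter_upwards [hza0.eventually_lt_const hδ, hzb0.eventually_lt_const hδ]
        with N hNa hNb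
      rw [Real.norm_eq_abs, abs_of_nonneg dist_nonneg]
      exact hδ' _ (hyB _) _ (hyB _) _ (hzB _) _ (hzB _)
        (by rwa [dist_comm]) (by rwa [dist_comm])
    -- dist x (m (z aN) (z bN)) → r
    have h3 : Tendsto (fun N => dist x (m (z (a N)) (z (b N)))) atTop (nhds r) := by
      have hlow : Tendsto (fun N => dist x (m (y (a N)) (y (b N))) -
          dist (m (y (a N)) (y (b N))) (m (z (a N)) (z (b N)))) atTop (nhds r) := by
        have := h1.sub h2
        simpa using this
      refine tendsto_of_tendsto_of_tendsto_of_le_of_le hlow tendsto_const_nhds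
        (fun N => ?_) (fun N => ?_)
      · have := dist_triangle x (m (z (a N)) (z (b N))) (m (y (a N)) (y (b N)))
        rw [dist_comm (m (z (a N)) (z (b N)))] at this
        linarith
      · refine le_trans (hA5 _ _ _) (max_le (hdz _).le (hdz _).le)
    have h4 := hA7' x r hr (fun N => z (a N)) (fun N => z (b N))
      (fun N => hzb _) (fun N => hzb _) h3
    -- dist (y aN) (y bN) → 0, contradiction with ε ≤ dist
    have h5 : Tendsto (fun N => dist (y (a N)) (y (b N))) atTop (nhds 0) := by
      have hsum : Tendsto (fun N => dist (z (a N)) (y (a N)) +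
          dist (z (a N)) (z (b N)) + dist (z (b N)) (y (b N))) atTop (nhds 0) := by
        have := (hza0.add h4).add hzb0
        simpa using this
      refine tendsto_of_tendsto_of_tendsto_of_le_of_le tendsto_const_nhds hsum
        (fun N => dist_nonneg) (fun N => ?_)
      have := dist_triangle4 (y (a N)) (z (a N)) (z (b N)) (y (b N))
      rw [dist_comm (y (a N)) (z (a N))] at this
      exact this
    obtain ⟨N, hNlt⟩ := (h5.eventually_lt_const hε).exists
    exact absurd (hab N) (not_le.2 hNlt)
  -- Part (a)
  have partA : ∀ x : X, ∀ y : ℕ → X, (∀ n, y n ∈ M) →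
      Tendsto (fun n => dist x (y n)) atTop (nhds (infDist x M)) →
      ∃ (z : X) (φ : ℕ → ℕ), z ∈ M ∧ StrictMono φ ∧
        Tendsto (fun n => y (φ n)) atTop (nhds z) := by
    intro x y hyM hty
    rcases eq_or_lt_of_le (infDist_nonneg (s := M) (x := x)) with h0 | hr
    · -- infDist = 0 : y n → x
      have hconv : Tendsto y atTop (nhds x) := by
        rw [tendsto_iff_dist_tendsto_zero]
        have : (fun n => dist (y n) x) = fun n => dist x (y n) := by
          funext n; exact dist_comm _ _
        rw [this]
        rwa [← h0] at hty
      exact ⟨x, id, hMcl.mem_of_tendsto hconv (Eventually.of_forall hyM),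
        strictMono_id, hconv⟩
    · obtain ⟨z, hz⟩ := cauchySeq_tendsto_of_complete (hcauchy x y hyM hr hty)
      exact ⟨z, id, hMcl.mem_of_tendsto hz (Eventually.of_forall hyM),
        strictMono_id, hz⟩
  refine ⟨partA, fun x => ?_⟩
  -- construct a minimizing sequence
  have hseq : ∀ n : ℕ, ∃ y ∈ M, dist x y < infDist x M + 1 / (n + 1) := by
    intro n
    exact (infDist_lt_iff hMne).1 (lt_add_of_pos_right _ (by positivity))
  choose y hyM hylt using hseq
  have hty : Tendsto (fun n => dist x (y n)) atTop (nhds (infDist x M)) := by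
    have hub : Tendsto (fun n : ℕ => infDist x M + 1 / (n + 1)) atTop
        (nhds (infDist x M)) := by
      have := tendsto_const_nhds (x := infDist x M) (f := atTop (α := ℕ)) |>.add
        tendsto_one_div_add_atTop_nhds_zero_nat
      simpa using this
    exact tendsto_of_tendsto_of_tendsto_of_le_of_le tendsto_const_nhds hub
      (fun n => infDist_le_dist_of_mem (hyM n)) (fun n => (hylt n).le)
  obtain ⟨z, φ, hzM, hφ, hconv⟩ := partA x y hyM hty
  have hdz : dist x z = infDist x M := by
    have h1 : Tendsto (fun n => dist x (y (φ n))) atTop (nhds (dist x z)) :=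
      tendsto_const_nhds.dist hconv
    have h2 : Tendsto (fun n => dist x (y (φ n))) atTop (nhds (infDist x M)) :=
      hty.comp hφ.tendsto_atTop
    exact tendsto_nhds_unique h1 h2
  refine ⟨z, ⟨hzM, hdz⟩, ?_⟩
  rintro w ⟨hwM, hwd⟩
  rcases eq_or_lt_of_le (infDist_nonneg (s := M) (x := x)) with h0 | hr
  · have hw : x = w := eq_of_dist_eq_zero (by rw [hwd, ← h0])
    have hz' : x = z := eq_of_dist_eq_zero (by rw [hdz, ← h0])
    rw [← hw, ← hz']
  · -- uniqueness via A'7 with constant sequences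
    have hmwz : dist x (m w z) = infDist x M := by
      refine le_antisymm ?_ (infDist_le_dist_of_mem (hmem _ hwM _ hzM))
      refine le_trans (hA5 _ _ _) ?_
      rw [hwd, hdz]
      exact max_le le_rfl le_rfl
    have h4 := hA7' x (infDist x M) hr (fun _ => w) (fun _ => z)
      (fun _ => by rw [mem_closedBall, dist_comm, hwd])
      (fun _ => by rw [mem_closedBall, dist_comm, hdz])
      (by simp only [hmwz]; exact tendsto_const_nhds)
    have : dist w z = 0 := tendsto_nhds_unique tendsto_const_nhds h4
    exact eq_of_dist_eq_zero this
end

section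
/- Let (X,d) be a metric space with a geodesic selection σ satisfying condition (C): 2·d(p, σ(x,y,1/2)) ≤ d(p,x) + d(p,y) for all p, x, y ∈ X. Let M be a nonempty bounded subset of X that is convex with respect to σ, let W be a nonempty bounded subset of X, let x, y ∈ X, and let ε, δ ≥ 0 with μ = max(ε,δ) > 0. Assume the metric ε-projection P(x,M,ε) = {z ∈ M : d(x,z) ≤ infDist(x,M) + ε} and the metric δ-projection P(y,W,δ) = {z ∈ W : d(y,z) ≤ infDist(y,W) + δ} are nonempty. Then hausdorffDist(P(y,W,δ), P(x,M,ε)) ≤ hausdorffDist(W,M) + (2·infDist(x,M)/μ + 2)·(|ε − δ| + 2·d(x,y) + 2·hausdorffDist(M,W)). -/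
open Metric Bornology Set Filter Topology

/-!
Iterating condition (C) shows that inside a set `S` closed under midpoints one can move from
`a ∈ S` a dyadic fraction `t` of the way towards any `w ∈ S`, reaching a point `p ∈ S` with
`d(q, p) ≤ (1 - t) d(q, a) + t d(q, w)` for every `q`. A point `a` whose distance to `b` exceeds
`infDist b S + ρ` by `u`, moved a fraction slightly above `u / (ρ + u)` towards a nearly nearest
point of `S`, lands in `P(b, S, ρ)` at cost at most `(2 infDist b S / (ρ + u) + 2) u`.

A point of `P(y, W, δ)` lies within `hausdorffDist` of a point of `M` whose distance to `x`
exceeds `infDist x M + ε` by at most `|ε - δ| + 2 d(x, y) + 2 hausdorffDist M W`, and that point is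
moved into `P(x, M, ε)`. Conversely, a point of `P(x, M, ε)` is first moved inside `M` until its
distance to `x` exceeds `infDist x M` by less than `δ - 2 d(x, y) - 2 hausdorffDist M W`; every
point of `W` within `hausdorffDist` of it then lies in `P(y, W, δ)`.
-/

lemma le_of_forall_mem_Ioo_le_add_mul {a b C g : ℝ} (hg : 0 < g)
    (h : ∀ η ∈ Ioo 0 g, a ≤ b + C * η) : a ≤ b := by
  have hlim : Tendsto (fun η : ℝ => b + C * η) (𝓝[>] 0) (𝓝 b) := by
    have : Continuous fun η : ℝ => b + C * η := by fun_prop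
    simpa using (this.tendsto 0).mono_left nhdsWithin_le_nhds
  exact ge_of_tendsto hlim (eventually_of_mem (Ioo_mem_nhdsGT hg) h)

section MidpointClosed

variable {Λ : Set ℝ}

lemma exists_bracket_of_midpoint_closed (h0 : (0 : ℝ) ∈ Λ) (h1 : (1 : ℝ) ∈ Λ)
    (hmid : ∀ s ∈ Λ, ∀ t ∈ Λ, (s + t) / 2 ∈ Λ) {α : ℝ} (hα0 : 0 ≤ α) (hα1 : α < 1) (n : ℕ) :
    ∃ s ∈ Λ, ∃ t ∈ Λ, s ≤ α ∧ α < t ∧ t - s ≤ (1 / 2) ^ n := by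
  induction n with
  | zero => exact ⟨0, h0, 1, h1, hα0, hα1, by norm_num⟩
  | succ n ih =>
    obtain ⟨s, hs, t, ht, hsα, hαt, hts⟩ := ih
    have hlen : (1 / 2 : ℝ) ^ (n + 1) = (1 / 2) ^ n / 2 := by rw [pow_succ]; ring
    rcases le_or_gt ((s + t) / 2) α with hm | hm
    · exact ⟨_, hmid s hs t ht, t, ht, hm, hαt, by rw [hlen]; linarith⟩
    · exact ⟨s, hs, _, hmid s hs t ht, hsα, hm, by rw [hlen]; linarith⟩

lemma exists_mem_Ioc_of_midpoint_closed (h0 : (0 : ℝ) ∈ Λ) (h1 : (1 : ℝ) ∈ Λ)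
    (hmid : ∀ s ∈ Λ, ∀ t ∈ Λ, (s + t) / 2 ∈ Λ) {α β : ℝ} (hα0 : 0 ≤ α) (hα1 : α < 1)
    (hαβ : α < β) : ∃ t ∈ Λ, t ∈ Ioc α β := by
  obtain ⟨n, hn⟩ := exists_pow_lt_of_lt_one (sub_pos.2 hαβ) (by norm_num : (1 / 2 : ℝ) < 1)
  obtain ⟨s, -, t, ht, hsα, hαt, hts⟩ :=
    exists_bracket_of_midpoint_closed h0 h1 hmid hα0 hα1 n
  exact ⟨t, ht, hαt, by linarith⟩

end MidpointClosed

section Interpolation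

variable {X : Type*} [PseudoMetricSpace X] {mid : X → X → X} {S : Set X} {a w : X}

def interpolationParams (S : Set X) (a w : X) : Set ℝ :=
  {t | ∃ p ∈ S, ∀ q : X, dist q p ≤ (1 - t) * dist q a + t * dist q w}

lemma midpoint_mem_interpolationParams
    (hC : ∀ p x y : X, 2 * dist p (mid x y) ≤ dist p x + dist p y)
    (hS : ∀ x ∈ S, ∀ y ∈ S, mid x y ∈ S) {s t : ℝ} (hs : s ∈ interpolationParams S a w)
    (ht : t ∈ interpolationParams S a w) : (s + t) / 2 ∈ interpolationParams S a w := by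
  obtain ⟨p, hp, hps⟩ := hs
  obtain ⟨p', hp', hp't⟩ := ht
  exact ⟨mid p p', hS p hp p' hp', fun q => by linarith [hC q p p', hps q, hp't q]⟩

lemma exists_mem_interpolationParams_Ioc
    (hC : ∀ p x y : X, 2 * dist p (mid x y) ≤ dist p x + dist p y)
    (hS : ∀ x ∈ S, ∀ y ∈ S, mid x y ∈ S) (ha : a ∈ S) (hw : w ∈ S) {α β : ℝ}
    (hα0 : 0 ≤ α) (hα1 : α < 1) (hαβ : α < β) :
    ∃ t ∈ interpolationParams S a w, t ∈ Ioc α β :=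
  exists_mem_Ioc_of_midpoint_closed (Λ := interpolationParams S a w)
    ⟨a, ha, fun q => by simp⟩ ⟨w, hw, fun q => by simp⟩
    (fun _ hs _ ht => midpoint_mem_interpolationParams hC hS hs ht) hα0 hα1 hαβ

end Interpolation

section MetricProjection

variable {X : Type*} [PseudoMetricSpace X] {S : Set X} {b : X} {ρ : ℝ}

def metricProj (S : Set X) (b : X) (ρ : ℝ) : Set X :=
  {z ∈ S | dist b z ≤ infDist b S + ρ}

lemma metricProj_nonempty (hS : S.Nonempty) (hρ : 0 < ρ) : (metricProj S b ρ).Nonempty := by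
  obtain ⟨w, hw, hbw⟩ := (infDist_lt_iff hS).1 (lt_add_of_pos_right (infDist b S) hρ)
  exact ⟨w, hw, hbw.le⟩

lemma nonneg_of_metricProj_nonempty (hP : (metricProj S b ρ).Nonempty) : 0 ≤ ρ := by
  obtain ⟨w, hw, hbw⟩ := hP
  linarith [infDist_le_dist_of_mem (x := b) hw]

lemma infDist_metricProj_le (hP : (metricProj S b ρ).Nonempty) :
    infDist b (metricProj S b ρ) ≤ infDist b S := by
  rcases le_or_gt ρ 0 with hρ | hρ
  · obtain ⟨w, hw⟩ := hP
    exact (infDist_le_dist_of_mem hw).trans (by linarith [hw.2])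
  refine le_of_forall_pos_lt_add fun η hη => ?_
  obtain ⟨w, hw, hbw⟩ := (infDist_lt_iff (hP.mono (sep_subset _ _))).1
    (lt_add_of_pos_right (infDist b S) (lt_min hρ hη))
  have hwP : w ∈ metricProj S b ρ := ⟨hw, by linarith [min_le_left ρ η]⟩
  exact (infDist_le_dist_of_mem hwP).trans_lt (by linarith [min_le_right ρ η])

lemma infDist_metricProj_le_of_midpointConvex_of_pos {mid : X → X → X}
    (hC : ∀ p x y : X, 2 * dist p (mid x y) ≤ dist p x + dist p y)
    (hS : ∀ x ∈ S, ∀ y ∈ S, mid x y ∈ S) (hSne : S.Nonempty) (hρ : 0 < ρ) {a : X} (ha : a ∈ S)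
    {u : ℝ} (hu : 0 < u) (hba : dist b a ≤ infDist b S + ρ + u) {τ : ℝ} (hτ : 0 < τ)
    (hτ1 : u / (ρ + u) + τ < 1) :
    infDist a (metricProj S b ρ) ≤ (u / (ρ + u) + τ) * (2 * infDist b S + 2 * ρ + 2 * u) := by
  set i := infDist b S
  set α := u / (ρ + u)
  have hα0 : 0 < α := by positivity
  have hα : α * (ρ + u) = u := div_mul_cancel₀ u (by positivity)
  obtain ⟨t₀, ht₀_def⟩ : ∃ t₀, t₀ = α + τ / 2 := ⟨_, rfl⟩
  have ht₀0 : 0 < t₀ := by linarith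
  have ht₀ : u < t₀ * (ρ + u) := by nlinarith
  have hγ : 0 < ρ + u - u / t₀ := by
    rw [sub_pos, div_lt_iff₀ ht₀0]; linarith
  obtain ⟨w, hw, hbw⟩ := (infDist_lt_iff hSne).1 (lt_add_of_pos_right i hγ)
  obtain ⟨t, ⟨p, hpS, hp⟩, ht₀t, htτ⟩ := exists_mem_interpolationParams_Ioc hC hS ha hw
    (α := t₀) (β := α + τ) ht₀0.le (by linarith) (by linarith)
  have hpP : p ∈ metricProj S b ρ := by
    refine ⟨hpS, (hp b).trans ?_⟩
    have hut : u ≤ t * (u / t₀) := by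
      rw [mul_div_assoc', le_div_iff₀ ht₀0]; nlinarith
    nlinarith [mul_le_mul_of_nonneg_left hba (show 0 ≤ 1 - t by linarith),
      mul_le_mul_of_nonneg_left hbw.le (show 0 ≤ t by linarith)]
  have haw : dist a w ≤ 2 * i + 2 * ρ + 2 * u := by
    have : 0 ≤ u / t₀ := by positivity
    linarith [dist_triangle_left a w b]
  calc infDist a (metricProj S b ρ) ≤ dist a p := infDist_le_dist_of_mem hpP
    _ ≤ t * dist a w := by simpa using hp a
    _ ≤ (α + τ) * (2 * i + 2 * ρ + 2 * u) := by gcongr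

lemma infDist_metricProj_le_of_midpointConvex {mid : X → X → X}
    (hC : ∀ p x y : X, 2 * dist p (mid x y) ≤ dist p x + dist p y)
    (hS : ∀ x ∈ S, ∀ y ∈ S, mid x y ∈ S) (hP : (metricProj S b ρ).Nonempty) {a : X} (ha : a ∈ S)
    {u : ℝ} (hu : 0 ≤ u) (hba : dist b a ≤ infDist b S + ρ + u) :
    infDist a (metricProj S b ρ) ≤ (2 * infDist b S / (ρ + u) + 2) * u := by
  set i := infDist b S
  have hi : 0 ≤ i := infDist_nonneg
  rcases hu.eq_or_lt with rfl | hu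
  · simp [infDist_zero_of_mem (show a ∈ metricProj S b ρ from ⟨ha, by simpa using hba⟩)]
  rcases (nonneg_of_metricProj_nonempty hP).eq_or_lt with rfl | hρ
  · obtain ⟨w, hw⟩ := hP
    calc infDist a (metricProj S b 0) ≤ dist a w := infDist_le_dist_of_mem hw
      _ ≤ dist b a + dist b w := dist_triangle_left a w b
      _ ≤ (i + u) + i := by linarith [hw.2]
      _ ≤ (2 * i / (0 + u) + 2) * u := by
        rw [zero_add, add_mul, div_mul_cancel₀ _ hu.ne']; linarith
  have hα : u / (ρ + u) < 1 := (div_lt_one (by positivity)).2 (by linarith)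
  refine le_of_forall_mem_Ioo_le_add_mul (sub_pos.2 hα) (C := 2 * i + 2 * ρ + 2 * u)
    fun τ ⟨hτ, hτ1⟩ => ?_
  calc infDist a (metricProj S b ρ) ≤ (u / (ρ + u) + τ) * (2 * i + 2 * ρ + 2 * u) :=
        infDist_metricProj_le_of_midpointConvex_of_pos hC hS (hP.mono (sep_subset _ _)) hρ ha
          hu hba hτ (by linarith)
    _ = (2 * i / (ρ + u) + 2) * u + (2 * i + 2 * ρ + 2 * u) * τ := by field_simp; ring

end MetricProjection

lemma two_mul_div_add_two_mul_sub_le {r g t μ K : ℝ} (hr : 0 ≤ r) (hg : 0 ≤ g) (ht : 0 < t)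
    (htμ : t ≤ μ) (hμK : μ - g ≤ K) : (2 * r / t + 2) * (t - g) ≤ (2 * r / μ + 2) * K := by
  have hμ : 0 < μ := ht.trans_le htμ
  have : g / μ ≤ g / t := div_le_div_of_nonneg_left hg ht htμ
  calc (2 * r / t + 2) * (t - g) = 2 * r * (1 - g / t) + 2 * (t - g) := by field_simp
    _ ≤ 2 * r * (1 - g / μ) + 2 * K := by gcongr; linarith
    _ = 2 * r / μ * (μ - g) + 2 * K := by field_simp
    _ ≤ 2 * r / μ * K + 2 * K := by gcongr
    _ = (2 * r / μ + 2) * K := by ring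

section Hausdorff

variable {X : Type*} [PseudoMetricSpace X]

lemma infDist_le_infDist_add_of_forall_mem {A B : Set X} {C : ℝ} (hA : A.Nonempty)
    (h : ∀ p ∈ A, infDist p B ≤ C) (z : X) : infDist z B ≤ infDist z A + C := by
  refine le_of_forall_pos_lt_add fun η hη => ?_
  obtain ⟨p, hp, hzp⟩ := (infDist_lt_iff hA).1 (lt_add_of_pos_right (infDist z A) hη)
  linarith [infDist_le_infDist_add_dist (x := z) (y := p) (s := B), h p hp]

lemma infDist_le_infDist_add_dist_add_hausdorffDist {M W : Set X}
    (hWM : hausdorffEDist W M ≠ ⊤) (x y : X) :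
    infDist x M ≤ infDist y W + dist x y + hausdorffDist W M := by
  linarith [infDist_le_infDist_add_dist (x := x) (y := y) (s := M),
    infDist_le_infDist_add_hausdorffDist (x := y) hWM]

variable {mid : X → X → X} {M W : Set X} {x y : X} {ε δ : ℝ}

lemma infDist_metricProj_le_hausdorffDist (hMW : hausdorffEDist M W ≠ ⊤) {m : X} (hm : m ∈ M)
    (h : dist x m + 2 * dist x y + 2 * hausdorffDist M W < infDist x M + δ) :
    infDist m (metricProj W y δ) ≤ hausdorffDist M W := by
  set H := hausdorffDist M W
  set κ := infDist x M + δ - (dist x m + 2 * dist x y + 2 * H) with hκ_def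
  have hκ : 0 < κ := by linarith
  have hWM : hausdorffEDist W M ≠ ⊤ := by rwa [hausdorffEDist_comm]
  have hr := infDist_le_infDist_add_dist_add_hausdorffDist hWM x y
  rw [hausdorffDist_comm] at hr
  refine le_of_forall_pos_lt_add fun η hη => ?_
  obtain ⟨w, hw, hmw⟩ := (infDist_lt_iff (nonempty_of_hausdorffEDist_ne_top ⟨m, hm⟩ hMW)).1
    ((infDist_le_hausdorffDist_of_mem hm hMW).trans_lt (lt_add_of_pos_right H (lt_min hη hκ)))
  have hwP : w ∈ metricProj W y δ := ⟨hw, by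
    linarith [dist_triangle4 y x m w, dist_comm x y, min_le_right η κ]⟩
  exact (infDist_le_dist_of_mem hwP).trans_lt (by linarith [min_le_left η κ])

lemma infDist_to_convex_metricProj_le
    (hC : ∀ p x y : X, 2 * dist p (mid x y) ≤ dist p x + dist p y)
    (hM : ∀ x ∈ M, ∀ y ∈ M, mid x y ∈ M) (hMW : hausdorffEDist M W ≠ ⊤)
    (hPx : (metricProj M x ε).Nonempty) (hμ : 0 < max ε δ) {z : X}
    (hz : z ∈ metricProj W y δ) :
    infDist z (metricProj M x ε) ≤ hausdorffDist M W +
      (2 * infDist x M / max ε δ + 2) * (|ε - δ| + 2 * dist x y + 2 * hausdorffDist M W) := by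
  obtain ⟨hzW, hyz⟩ := hz
  set r := infDist x M
  set H := hausdorffDist M W
  set K := |ε - δ| + 2 * dist x y + 2 * H
  have hWM : hausdorffEDist W M ≠ ⊤ := by rwa [hausdorffEDist_comm]
  have hs := infDist_le_infDist_add_dist_add_hausdorffDist hMW y x
  have hμK : max ε δ ≤ ε + K := by
    linarith [max_sub_min_eq_abs ε δ, min_le_left ε δ, abs_sub_comm ε δ,
      dist_nonneg (x := x) (y := y), hausdorffDist_nonneg (s := M) (t := W)]
  refine le_of_forall_mem_Ioo_le_add_mul one_pos (C := 2 * r / max ε δ + 3)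
    fun η ⟨hη, _⟩ => ?_
  obtain ⟨z', hz'M, hzz'⟩ := (infDist_lt_iff (hPx.mono (sep_subset _ _))).1
    ((infDist_le_hausdorffDist_of_mem hzW hWM).trans_lt (lt_add_of_pos_right _ hη))
  rw [hausdorffDist_comm] at hzz'
  have hxz' : dist x z' ≤ r + ε + (K + η) := by
    linarith [dist_triangle4 x y z z', neg_abs_le (ε - δ), dist_comm x y]
  have hr : 0 ≤ r := infDist_nonneg
  have hK : 0 ≤ K := by
    have : 0 ≤ H := hausdorffDist_nonneg
    positivity
  calc infDist z (metricProj M x ε) ≤ infDist z' (metricProj M x ε) + dist z z' :=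
        infDist_le_infDist_add_dist
    _ ≤ (2 * r / (ε + (K + η)) + 2) * (K + η) + (H + η) := add_le_add
        (infDist_metricProj_le_of_midpointConvex hC hM hPx hz'M (by positivity) hxz') hzz'.le
    _ ≤ (2 * r / max ε δ + 2) * (K + η) + (H + η) := by gcongr; linarith
    _ = H + (2 * r / max ε δ + 2) * K + (2 * r / max ε δ + 3) * η := by ring

lemma infDist_metricProj_le_of_excess
    (hC : ∀ p x y : X, 2 * dist p (mid x y) ≤ dist p x + dist p y)
    (hM : ∀ x ∈ M, ∀ y ∈ M, mid x y ∈ M) (hMW : hausdorffEDist M W ≠ ⊤) {z : X} (hzM : z ∈ M)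
    {g : ℝ} (hg : 0 < g) (hgδ : g + 2 * dist x y + 2 * hausdorffDist M W ≤ δ)
    (hgz : infDist x M + g ≤ dist x z) :
    infDist z (metricProj W y δ) ≤ hausdorffDist M W +
      (2 * infDist x M / (dist x z - infDist x M) + 2) * (dist x z - infDist x M - g) := by
  set r := infDist x M
  set t := dist x z - r
  refine le_of_forall_mem_Ioo_le_add_mul hg (C := 2 * r / t + 2) fun η ⟨hη, hηg⟩ => ?_
  have hP : (metricProj M x (g - η)).Nonempty := metricProj_nonempty ⟨z, hzM⟩ (by linarith)
  have hmove := infDist_metricProj_le_of_midpointConvex hC hM hP hzM (u := t - (g - η))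
    (by linarith) (by linarith)
  rw [show g - η + (t - (g - η)) = t by ring] at hmove
  have hjump := infDist_le_infDist_add_of_forall_mem hP (fun p hp =>
    infDist_metricProj_le_hausdorffDist (x := x) (y := y) (δ := δ) hMW hp.1 (by linarith [hp.2])) z
  linarith

lemma infDist_from_convex_metricProj_le
    (hC : ∀ p x y : X, 2 * dist p (mid x y) ≤ dist p x + dist p y)
    (hM : ∀ x ∈ M, ∀ y ∈ M, mid x y ∈ M) (hMW : hausdorffEDist M W ≠ ⊤)
    (hPy : (metricProj W y δ).Nonempty) (hμ : 0 < max ε δ) {z : X}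
    (hz : z ∈ metricProj M x ε) :
    infDist z (metricProj W y δ) ≤ hausdorffDist M W +
      (2 * infDist x M / max ε δ + 2) * (|ε - δ| + 2 * dist x y + 2 * hausdorffDist M W) := by
  obtain ⟨hzM, hxz⟩ := hz
  set r := infDist x M
  set H := hausdorffDist M W
  set K := |ε - δ| + 2 * dist x y + 2 * H
  have hr : 0 ≤ r := infDist_nonneg
  have hH : 0 ≤ H := hausdorffDist_nonneg
  have hs := infDist_le_infDist_add_dist_add_hausdorffDist hMW y x
  rcases le_or_gt (max ε δ) K with hμK | hKμ
  · have h2r : 2 * r ≤ 2 * r / max ε δ * K := by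
      rw [div_mul_eq_mul_div, le_div_iff₀ hμ]; nlinarith
    calc infDist z (metricProj W y δ) ≤ infDist y (metricProj W y δ) + dist z y :=
          infDist_le_infDist_add_dist
      _ ≤ infDist y W + (dist x z + dist x y) :=
          add_le_add (infDist_metricProj_le hPy) (dist_triangle_left z y x)
      _ ≤ H + (2 * r / max ε δ + 2) * K := by
          linarith [le_max_left ε δ, dist_comm y x, abs_nonneg (ε - δ)]
  have hgap : 0 < δ - 2 * dist x y - 2 * H := by
    linarith [max_sub_min_eq_abs ε δ, min_le_right ε δ, abs_sub_comm ε δ]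
  by_cases hnear : dist x z + 2 * dist x y + 2 * H < r + δ
  · exact (infDist_metricProj_le_hausdorffDist hMW hzM hnear).trans
      (le_add_of_nonneg_right (by positivity))
  have hfar := infDist_metricProj_le_of_excess hC hM hMW hzM hgap (by linarith) (by linarith)
  have harith := two_mul_div_add_two_mul_sub_le hr hgap.le (t := dist x z - r)
    (μ := max ε δ) (K := K) (by linarith) (by linarith [le_max_left ε δ])
    (by linarith [max_sub_min_eq_abs ε δ, min_le_right ε δ, abs_sub_comm ε δ])
  linarith

end Hausdorff

theorem delta_projection_estimate_general {X : Type*} [MetricSpace X]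
    (σ : X → X → ℝ → X)
    (hC : ∀ p x y : X, 2 * dist p (σ x y (1 / 2)) ≤ dist p x + dist p y)
    (M W : Set X)
    (hMne : M.Nonempty) (hMb : IsBounded M)
    (hMconv : ∀ x ∈ M, ∀ y ∈ M, ∀ t ∈ Icc (0 : ℝ) 1, σ x y t ∈ M)
    (hWne : W.Nonempty) (hWb : IsBounded W)
    (x y : X) (ε δ : ℝ)
    (hμ : 0 < max ε δ)
    (hPx : ({z ∈ M | dist x z ≤ infDist x M + ε}).Nonempty)
    (hPy : ({z ∈ W | dist y z ≤ infDist y W + δ}).Nonempty) :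
    hausdorffDist {z ∈ W | dist y z ≤ infDist y W + δ} {z ∈ M | dist x z ≤ infDist x M + ε} ≤
      hausdorffDist W M +
        (2 * infDist x M / max ε δ + 2) *
          (|ε - δ| + 2 * dist x y + 2 * hausdorffDist M W) := by
  have hMW := hausdorffEDist_ne_top_of_nonempty_of_bounded hMne hWne hMb hWb
  have hM : ∀ a ∈ M, ∀ b ∈ M, σ a b (1 / 2) ∈ M := fun a ha b hb =>
    hMconv a ha b hb _ ⟨by norm_num, by norm_num⟩
  change hausdorffDist (metricProj W y δ) (metricProj M x ε) ≤ _
  rw [hausdorffDist_comm (s := W)]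
  have hK : 0 ≤ |ε - δ| + 2 * dist x y + 2 * hausdorffDist M W := by
    have : 0 ≤ hausdorffDist M W := hausdorffDist_nonneg
    positivity
  have hr : 0 ≤ infDist x M := infDist_nonneg
  exact hausdorffDist_le_of_infDist (add_nonneg hausdorffDist_nonneg (by positivity))
    (fun z hz => infDist_to_convex_metricProj_le hC hM hMW hPx hμ hz)
    (fun z hz => infDist_from_convex_metricProj_le hC hM hMW hPy hμ hz)

/-- Continuity estimate for the metric δ-projection onto a convex set in a geodesic
space satisfying condition (C). -/
theorem delta_projection_estimate {X : Type*} [MetricSpace X]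
    (σ : X → X → ℝ → X)
    (hσ0 : ∀ x y : X, σ x y 0 = x) (hσ1 : ∀ x y : X, σ x y 1 = y)
    (hσd : ∀ x y : X, ∀ s ∈ Icc (0 : ℝ) 1, ∀ t ∈ Icc (0 : ℝ) 1,
      dist (σ x y s) (σ x y t) = |s - t| * dist x y)
    (hC : ∀ p x y : X, 2 * dist p (σ x y (1 / 2)) ≤ dist p x + dist p y)
    (M W : Set X)
    (hMne : M.Nonempty) (hMb : IsBounded M)
    (hMconv : ∀ x ∈ M, ∀ y ∈ M, ∀ t ∈ Icc (0 : ℝ) 1, σ x y t ∈ M)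
    (hWne : W.Nonempty) (hWb : IsBounded W)
    (x y : X) (ε δ : ℝ) (hε : 0 ≤ ε) (hδ : 0 ≤ δ)
    (hμ : 0 < max ε δ)
    (hPx : ({z ∈ M | dist x z ≤ infDist x M + ε}).Nonempty)
    (hPy : ({z ∈ W | dist y z ≤ infDist y W + δ}).Nonempty) :
    hausdorffDist {z ∈ W | dist y z ≤ infDist y W + δ} {z ∈ M | dist x z ≤ infDist x M + ε} ≤
      hausdorffDist W M +
        (2 * infDist x M / max ε δ + 2) *
          (|ε - δ| + 2 * dist x y + 2 * hausdorffDist M W) :=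
  delta_projection_estimate_general σ hC M W hMne hMb hMconv hWne hWb x y ε δ hμ hPx hPy
end

section
/- Let (X,d_X) and (Y,d_Y) be metric spaces equipped with line selections ω_X and ω_Y respectively, and let f : X → Y be a continuous map satisfying f(ω_X(x,y,λ)) = ω_Y(f(x), f(y), λ) for all x, y ∈ X and all λ ∈ ℝ. Then f maps bounded sets to bounded sets: for every bounded subset S of X, the image f(S) is bounded in Y. -/
open Metric Bornology

/-- A continuous map between metric spaces with line selections that intertwines the
line selections maps bounded sets to bounded sets. -/
theorem geodesic_map_bounded_image {X Y : Type*} [MetricSpace X] [MetricSpace Y]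
    (ωX : X → X → ℝ → X)
    (hX0 : ∀ x y : X, ωX x y 0 = x) (hX1 : ∀ x y : X, ωX x y 1 = y)
    (hXd : ∀ (x y : X) (s t : ℝ), dist (ωX x y s) (ωX x y t) = |s - t| * dist x y)
    (ωY : Y → Y → ℝ → Y)
    (hY0 : ∀ x y : Y, ωY x y 0 = x) (hY1 : ∀ x y : Y, ωY x y 1 = y)
    (hYd : ∀ (x y : Y) (s t : ℝ), dist (ωY x y s) (ωY x y t) = |s - t| * dist x y)
    (f : X → Y) (hf : Continuous f)
    (hgeo : ∀ (x y : X) (l : ℝ), f (ωX x y l) = ωY (f x) (f y) l)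
    (S : Set X) (hS : IsBounded S) :
    IsBounded (f '' S) := by
  rcases S.eq_empty_or_nonempty with rfl | ⟨x₀, hx₀⟩
  · simp
  -- continuity at x₀ gives δ
  obtain ⟨δ, hδ, H⟩ := Metric.continuousAt_iff.1 (hf.continuousAt (x := x₀)) 1 one_pos
  -- key estimate: for all y, dist (f y) (f x₀) ≤ 2 * dist y x₀ / δ
  have key : ∀ y : X, dist (f y) (f x₀) ≤ 2 * dist y x₀ / δ := by
    intro y
    rcases eq_or_ne (dist x₀ y) 0 with hD | hD
    · rw [dist_comm y x₀, dist_comm, (dist_eq_zero.1 hD)]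
      simp [div_nonneg, dist_nonneg, hδ.le]
    · have hDpos : 0 < dist x₀ y := lt_of_le_of_ne dist_nonneg (Ne.symm hD)
      set s : ℝ := (δ / 2) / dist x₀ y with hs
      have hspos : 0 < s := div_pos (half_pos hδ) hDpos
      have hz : dist (ωX x₀ y s) x₀ < δ := by
        have := hXd x₀ y s 0
        rw [hX0] at this
        rw [this, sub_zero, abs_of_pos hspos, hs, div_mul_cancel₀ _ (ne_of_gt hDpos)]
        linarith
      have h1 : dist (f (ωX x₀ y s)) (f x₀) < 1 := H hz
      rw [hgeo] at h1
      have h2 : dist (ωY (f x₀) (f y) s) (f x₀) = s * dist (f x₀) (f y) := by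
        have := hYd (f x₀) (f y) s 0
        rw [hY0] at this
        rw [this, sub_zero, abs_of_pos hspos]
      rw [h2] at h1
      have : dist (f x₀) (f y) < 1 / s := (lt_div_iff₀ hspos).2 (by linarith [mul_comm s (dist (f x₀) (f y))])
      rw [hs, one_div_div] at this
      rw [dist_comm (f y) (f x₀), dist_comm y x₀]
      calc dist (f x₀) (f y) ≤ dist x₀ y / (δ / 2) := this.le
        _ = 2 * dist x₀ y / δ := by ring
  -- bounded
  obtain ⟨R, hR⟩ := hS.subset_closedBall x₀
  rw [Metric.isBounded_iff_subset_closedBall (f x₀)]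
  refine ⟨2 * max R 0 / δ, ?_⟩
  rintro _ ⟨y, hy, rfl⟩
  have hyR : dist y x₀ ≤ max R 0 := le_trans (hR hy) (le_max_left _ _)
  have := key y
  rw [Metric.mem_closedBall]
  calc dist (f y) (f x₀) ≤ 2 * dist y x₀ / δ := this
    _ ≤ 2 * max R 0 / δ := by
        gcongr
end

section
/- Let (X,d_X) and (Y,d_Y) be complete metric spaces equipped with line selections ω_X and ω_Y such that: for each λ ∈ ℝ the maps (x,y) ↦ ω_X(x,y,λ) and (x,y) ↦ ω_Y(x,y,λ) are jointly continuous; both line selections satisfy the composition law ω(z, ω(z,x,λ), μ) = ω(z, x, λ·μ) for all z, x and λ, μ ∈ ℝ; and all closed balls in X and in Y are convex with respect to the corresponding line selection (ω(x,y,t) lies in the ball whenever x and y do and t ∈ [0,1]). If f : X → Y is a continuous surjection satisfying f(ω_X(x,y,λ)) = ω_Y(f(x), f(y), λ) for all x, y ∈ X and all λ ∈ ℝ, then f is an open map. -/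
/-!
Baire's theorem gives a ball `ball (f x₁) r` inside the closure of the image of a ball
`closedBall x₁ R`. Because `f` intertwines the line selections, the dilation
`u ↦ ωY (f a) u μ` carries an inclusion `ball (f a) r ⊆ closure (f '' closedBall a R)` to the
same inclusion with both radii multiplied by `μ`; recentring by the triangle inequality, `f`
becomes uniformly approximately open near every point:
`ball (f a) (c * η) ⊆ closure (f '' closedBall a η)`. As in Banach's proof, completeness of `X`
then removes the closure by successive approximation with geometrically shrinking radii.
-/

open Metric Set Filter Function Topology

namespace LineSelection

variable {X : Type*} [PseudoMetricSpace X] {ω : X → X → ℝ → X}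

theorem dist_left (h0 : ∀ x y, ω x y 0 = x)
    (hd : ∀ (x y : X) (s t : ℝ), dist (ω x y s) (ω x y t) = |s - t| * dist x y)
    (x y : X) (t : ℝ) : dist x (ω x y t) = |t| * dist x y := by
  simpa [h0] using hd x y 0 t

theorem mapsTo_closedBall (h0 : ∀ x y, ω x y 0 = x)
    (hd : ∀ (x y : X) (s t : ℝ), dist (ω x y s) (ω x y t) = |s - t| * dist x y)
    (x : X) (R μ : ℝ) : MapsTo (ω x · μ) (closedBall x R) (closedBall x (|μ| * R)) := by
  intro y hy
  rw [mem_closedBall'] at hy ⊢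
  rw [dist_left h0 hd]
  exact mul_le_mul_of_nonneg_left hy (abs_nonneg μ)

theorem ball_subset_image_ball (h0 : ∀ x y, ω x y 0 = x) (h1 : ∀ x y, ω x y 1 = y)
    (hd : ∀ (x y : X) (s t : ℝ), dist (ω x y s) (ω x y t) = |s - t| * dist x y)
    (hcomp : ∀ (z x : X) (l μ : ℝ), ω z (ω z x l) μ = ω z x (l * μ))
    (x : X) {r μ : ℝ} (hμ : 0 < μ) : ball x (μ * r) ⊆ (ω x · μ) '' ball x r := by
  intro y hy
  refine ⟨ω x y μ⁻¹, ?_, by simp only [hcomp, inv_mul_cancel₀ hμ.ne', h1]⟩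
  rw [mem_ball'] at hy ⊢
  rwa [dist_left h0 hd, abs_of_pos (inv_pos.2 hμ), inv_mul_lt_iff₀ hμ]

end LineSelection

section ApproximatelyOpen

variable {X Y : Type*} [PseudoMetricSpace X] [PseudoMetricSpace Y] {f : X → Y}

theorem ball_mul_subset_closure_image_closedBall_mul {ωX : X → X → ℝ → X} {ωY : Y → Y → ℝ → Y}
    (hX0 : ∀ x y : X, ωX x y 0 = x)
    (hXd : ∀ (x y : X) (s t : ℝ), dist (ωX x y s) (ωX x y t) = |s - t| * dist x y)
    (hY0 : ∀ x y : Y, ωY x y 0 = x) (hY1 : ∀ x y : Y, ωY x y 1 = y)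
    (hYd : ∀ (x y : Y) (s t : ℝ), dist (ωY x y s) (ωY x y t) = |s - t| * dist x y)
    (hYcont : ∀ l : ℝ, Continuous fun q : Y × Y => ωY q.1 q.2 l)
    (hYcomp : ∀ (z x : Y) (l μ : ℝ), ωY z (ωY z x l) μ = ωY z x (l * μ))
    (hgeo : ∀ (x y : X) (l : ℝ), f (ωX x y l) = ωY (f x) (f y) l)
    (a : X) (r R μ : ℝ) (hμ : 0 < μ) (h : ball (f a) r ⊆ closure (f '' closedBall a R)) :
    ball (f a) (μ * r) ⊆ closure (f '' closedBall a (μ * R)) := by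
  set g : Y → Y := (ωY (f a) · μ)
  have hg : Continuous g := (hYcont μ).comp (continuous_const.prodMk continuous_id)
  have hg_image : g '' (f '' closedBall a R) ⊆ f '' closedBall a (μ * R) := by
    rintro _ ⟨_, ⟨x, hx, rfl⟩, rfl⟩
    refine ⟨ωX a x μ, ?_, hgeo a x μ⟩
    simpa only [abs_of_pos hμ] using LineSelection.mapsTo_closedBall hX0 hXd a R μ hx
  calc ball (f a) (μ * r) ⊆ g '' ball (f a) r :=
        LineSelection.ball_subset_image_ball hY0 hY1 hYd hYcomp (f a) hμ
    _ ⊆ g '' closure (f '' closedBall a R) := image_mono h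
    _ ⊆ closure (g '' (f '' closedBall a R)) := image_closure_subset_closure_image hg
    _ ⊆ closure (f '' closedBall a (μ * R)) := closure_mono hg_image

theorem exists_ball_subset_closure_image_closedBall [BaireSpace Y] (hsurj : Surjective f)
    (x₀ : X) : ∃ x₁ r R, 0 < r ∧ 0 ≤ R ∧ ball (f x₁) r ⊆ closure (f '' closedBall x₁ R) := by
  have : Nonempty Y := ⟨f x₀⟩
  have hcover : ⋃ n : ℕ, closure (f '' closedBall x₀ n) = univ := by
    refine eq_univ_of_subset (iUnion_mono fun n => subset_closure) ?_
    rw [← image_iUnion, iUnion_closedBall_nat, image_univ, hsurj.range_eq]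
  obtain ⟨n, y, hy⟩ := nonempty_interior_of_iUnion_of_closed (fun _ => isClosed_closure) hcover
  obtain ⟨r, hr, hball⟩ := isOpen_iff.1 isOpen_interior y hy
  obtain ⟨x₁, rfl⟩ := hsurj y
  refine ⟨x₁, r, n + dist x₀ x₁, hr, by positivity, hball.trans (interior_subset.trans ?_)⟩
  exact closure_mono (image_mono (closedBall_subset_closedBall' le_rfl))

theorem ball_subset_closure_image_closedBall_of_scale
    (hscale : ∀ (a : X) (r R μ : ℝ), 0 < μ → ball (f a) r ⊆ closure (f '' closedBall a R) →
      ball (f a) (μ * r) ⊆ closure (f '' closedBall a (μ * R)))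
    {x₁ : X} {r R : ℝ} (hr : 0 < r)
    (h₁ : ball (f x₁) r ⊆ closure (f '' closedBall x₁ R)) (a : X) {s : ℝ} (hs : 0 < s) :
    ball (f a) s ⊆ closure (f '' closedBall a ((dist (f x₁) (f a) + s) / r * R + dist x₁ a)) := by
  have hμ : 0 < (dist (f x₁) (f a) + s) / r := by positivity
  calc ball (f a) s ⊆ ball (f x₁) ((dist (f x₁) (f a) + s) / r * r) := by
        refine ball_subset_ball' ?_
        rw [div_mul_cancel₀ _ hr.ne', dist_comm]
        linarith
    _ ⊆ closure (f '' closedBall x₁ ((dist (f x₁) (f a) + s) / r * R)) := hscale _ _ _ _ hμ h₁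
    _ ⊆ _ := closure_mono (image_mono (closedBall_subset_closedBall' le_rfl))

theorem exists_uniform_ball_subset_closure_image_closedBall
    (hscale : ∀ (a : X) (r R μ : ℝ), 0 < μ → ball (f a) r ⊆ closure (f '' closedBall a R) →
      ball (f a) (μ * r) ⊆ closure (f '' closedBall a (μ * R)))
    {x₁ : X} {r R : ℝ} (hr : 0 < r)
    (hR : 0 ≤ R) (h₁ : ball (f x₁) r ⊆ closure (f '' closedBall x₁ R)) (ξ : X) {ρ : ℝ}
    (hρ : 0 ≤ ρ) :
    ∃ c, 0 < c ∧ c ≤ 1 ∧ ∀ a ∈ closedBall ξ ρ, f a ∈ closedBall (f ξ) ρ →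
      ∀ η > 0, ball (f a) (c * η) ⊆ closure (f '' closedBall a η) := by
  set K := (dist (f x₁) (f ξ) + ρ + 1) / r * R + dist x₁ ξ + ρ + 1
  have hK : 1 ≤ K := by
    have : 0 ≤ (dist (f x₁) (f ξ) + ρ + 1) / r * R := by positivity
    linarith [dist_nonneg (x := x₁) (y := ξ)]
  refine ⟨K⁻¹, by positivity, inv_le_one_of_one_le₀ hK, fun a ha hfa η hη => ?_⟩
  rw [mem_closedBall'] at ha hfa
  have hball : ball (f a) 1 ⊆ closure (f '' closedBall a K) := by
    refine (ball_subset_closure_image_closedBall_of_scale hscale hr h₁ a one_pos).trans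
      (closure_mono (image_mono (closedBall_subset_closedBall ?_)))
    have hfx := dist_triangle (f x₁) (f ξ) (f a)
    have hx := dist_triangle x₁ ξ a
    have : (dist (f x₁) (f a) + 1) / r * R ≤ (dist (f x₁) (f ξ) + ρ + 1) / r * R := by
      gcongr
      linarith
    linarith
  have := hscale a 1 K (K⁻¹ * η) (by positivity) hball
  rwa [mul_one, mul_right_comm, inv_mul_cancel₀ (by positivity), one_mul] at this

end ApproximatelyOpen

theorem ball_subset_image_closedBall_of_approx {X Y : Type*} [PseudoMetricSpace X]
    [CompleteSpace X] [MetricSpace Y] {f : X → Y} (hf : Continuous f) {ξ : X} {ε c : ℝ}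
    (hε : 0 < ε) (hc : c ≤ 1)
    (happrox : ∀ a ∈ closedBall ξ ε, f a ∈ closedBall (f ξ) ε →
      ∀ η > 0, ball (f a) (c * η) ⊆ closure (f '' closedBall a η)) :
    ball (f ξ) (c * (ε / 2)) ⊆ f '' closedBall ξ ε := by
  intro y hy
  rw [mem_ball] at hy
  have hc₀ : 0 < c := pos_of_mul_pos_left (dist_nonneg.trans_lt hy) (by positivity)
  set ρ : ℕ → ℝ := fun k => ε / 2 / 2 ^ k with hρ
  have hρ_pos (k : ℕ) : 0 < ρ k := by positivity
  have hρ_le (k : ℕ) : ρ k ≤ ε / 2 := div_le_self (by positivity) (one_le_pow₀ one_le_two)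
  have hρ_succ (k : ℕ) : ρ k = 2 * ρ (k + 1) := by simp only [hρ, pow_succ]; field_simp
  -- The radii `ρ k` sum to `ε`, which keeps the iterates in `closedBall ξ ε`.
  have step (k : ℕ) (a : X) (ha : dist a ξ ≤ ε - 2 * ρ k ∧ dist (f a) y < c * ρ k) :
      ∃ b, dist a b ≤ ρ k ∧ (dist b ξ ≤ ε - 2 * ρ (k + 1) ∧ dist (f b) y < c * ρ (k + 1)) := by
    have ha_ball : a ∈ closedBall ξ ε := by
      rw [mem_closedBall]; linarith [hρ_pos k]
    have hfa_ball : f a ∈ closedBall (f ξ) ε := by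
      rw [mem_closedBall]
      nlinarith [dist_triangle (f a) y (f ξ), dist_comm y (f ξ), hρ_le k]
    have hy_mem : y ∈ closure (f '' closedBall a (ρ k)) :=
      happrox a ha_ball hfa_ball (ρ k) (hρ_pos k) (by rw [mem_ball']; exact ha.2)
    obtain ⟨_, ⟨b, hb, rfl⟩, hby⟩ :=
      mem_closure_iff.1 hy_mem (c * ρ (k + 1)) (by have := hρ_pos (k + 1); positivity)
    rw [mem_closedBall'] at hb
    refine ⟨b, hb, ?_, by rwa [dist_comm]⟩
    linarith [dist_triangle b a ξ, dist_comm a b, hρ_succ k]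
  choose! next hnext using step
  let u : ℕ → X := fun k => Nat.rec ξ next k
  have hu (k : ℕ) : dist (u k) ξ ≤ ε - 2 * ρ k ∧ dist (f (u k)) y < c * ρ k := by
    induction k with
    | zero =>
      change dist ξ ξ ≤ ε - 2 * (ε / 2 / 2 ^ 0) ∧ dist (f ξ) y < c * (ε / 2 / 2 ^ 0)
      rw [dist_self, pow_zero, div_one, dist_comm]
      exact ⟨by linarith, hy⟩
    | succ k ih => exact (hnext k (u k) ih).2
  obtain ⟨x, hx⟩ := cauchySeq_tendsto_of_complete
    (cauchySeq_of_le_geometric_two fun k => (hnext k (u k) (hu k)).1)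
  refine ⟨x, isClosed_closedBall.mem_of_tendsto hx (Eventually.of_forall fun k => ?_), ?_⟩
  · rw [mem_closedBall]; linarith [(hu k).1, hρ_pos k]
  · have hρ_lim : Tendsto (fun k => c * ρ k) atTop (𝓝 0) := by
      simpa using (tendsto_const_nhds.div_atTop
        (tendsto_pow_atTop_atTop_of_one_lt one_lt_two)).const_mul c
    refine tendsto_nhds_unique ((hf.tendsto x).comp hx) (tendsto_iff_dist_tendsto_zero.2 ?_)
    exact squeeze_zero (fun _ => dist_nonneg) (fun k => (hu k).2.le) hρ_lim

theorem geodesic_open_mapping_general {X Y : Type*} [MetricSpace X] [CompleteSpace X]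
    [MetricSpace Y] [CompleteSpace Y]
    (ωX : X → X → ℝ → X)
    (hX0 : ∀ x y : X, ωX x y 0 = x)
    (hXd : ∀ (x y : X) (s t : ℝ), dist (ωX x y s) (ωX x y t) = |s - t| * dist x y)
    (ωY : Y → Y → ℝ → Y)
    (hY0 : ∀ x y : Y, ωY x y 0 = x) (hY1 : ∀ x y : Y, ωY x y 1 = y)
    (hYd : ∀ (x y : Y) (s t : ℝ), dist (ωY x y s) (ωY x y t) = |s - t| * dist x y)
    (hYcont : ∀ l : ℝ, Continuous fun q : Y × Y => ωY q.1 q.2 l)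
    (hYcomp : ∀ (z x : Y) (l μ : ℝ), ωY z (ωY z x l) μ = ωY z x (l * μ))
    (f : X → Y) (hf : Continuous f) (hsurj : Function.Surjective f)
    (hgeo : ∀ (x y : X) (l : ℝ), f (ωX x y l) = ωY (f x) (f y) l) :
    IsOpenMap f := by
  have hscale :=
    ball_mul_subset_closure_image_closedBall_mul hX0 hXd hY0 hY1 hYd hYcont hYcomp hgeo
  refine IsOpenMap.of_nhds_le fun ξ => (nhds_basis_closedBall.map f).ge_iff.2 fun ε hε => ?_
  obtain ⟨x₁, r, R, hr, hR, h₁⟩ := exists_ball_subset_closure_image_closedBall hsurj ξ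
  obtain ⟨c, hc, hc1, happrox⟩ :=
    exists_uniform_ball_subset_closure_image_closedBall hscale hr hR h₁ ξ hε.le
  exact mem_of_superset (ball_mem_nhds _ (by positivity))
    (ball_subset_image_closedBall_of_approx hf hε hc1 happrox)

/-- Open mapping theorem for geodesic surjections of complete geodesic spaces with line
selections: joint continuity of the line selections, the composition law, and convexity
of all closed balls imply that every continuous geodesic surjection is open. -/
theorem geodesic_open_mapping {X Y : Type*} [MetricSpace X] [CompleteSpace X]
    [MetricSpace Y] [CompleteSpace Y]
    (ωX : X → X → ℝ → X)
    (hX0 : ∀ x y : X, ωX x y 0 = x) (hX1 : ∀ x y : X, ωX x y 1 = y)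
    (hXd : ∀ (x y : X) (s t : ℝ), dist (ωX x y s) (ωX x y t) = |s - t| * dist x y)
    (hXcont : ∀ l : ℝ, Continuous fun q : X × X => ωX q.1 q.2 l)
    (hXcomp : ∀ (z x : X) (l μ : ℝ), ωX z (ωX z x l) μ = ωX z x (l * μ))
    (hXball : ∀ (c : X) (ρ : ℝ), ∀ x ∈ closedBall c ρ, ∀ y ∈ closedBall c ρ,
      ∀ t ∈ Icc (0 : ℝ) 1, ωX x y t ∈ closedBall c ρ)
    (ωY : Y → Y → ℝ → Y)
    (hY0 : ∀ x y : Y, ωY x y 0 = x) (hY1 : ∀ x y : Y, ωY x y 1 = y)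
    (hYd : ∀ (x y : Y) (s t : ℝ), dist (ωY x y s) (ωY x y t) = |s - t| * dist x y)
    (hYcont : ∀ l : ℝ, Continuous fun q : Y × Y => ωY q.1 q.2 l)
    (hYcomp : ∀ (z x : Y) (l μ : ℝ), ωY z (ωY z x l) μ = ωY z x (l * μ))
    (hYball : ∀ (c : Y) (ρ : ℝ), ∀ x ∈ closedBall c ρ, ∀ y ∈ closedBall c ρ,
      ∀ t ∈ Icc (0 : ℝ) 1, ωY x y t ∈ closedBall c ρ)
    (f : X → Y) (hf : Continuous f) (hsurj : Function.Surjective f)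
    (hgeo : ∀ (x y : X) (l : ℝ), f (ωX x y l) = ωY (f x) (f y) l) :
    IsOpenMap f :=
  geodesic_open_mapping_general ωX hX0 hXd ωY hY0 hY1 hYd hYcont hYcomp f hf hsurj hgeo
end

section
/- Let (X,d) be a complete metric space on which the group of similarities acts transitively: for all x, y ∈ X there exist a surjection f : X → X and a real σ > 0 with d(f(a), f(b)) = σ·d(a,b) for all a, b ∈ X and f(x) = y. Then the isometry group acts transitively: for all x, y ∈ X there exists a surjection g : X → X with d(g(a), g(b)) = d(a,b) for all a, b ∈ X and g(x) = y. -/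
/-!
Similarities `X ≃ᵈ X` form a group and the ratio is a homomorphism to the commutative monoid
`ℝ≥0`, so every commutator `⁅e, u⁆ = e u e⁻¹ u⁻¹` is an isometry. Given a similarity `e` with
`e x = y` and ratio `≠ 1`, either `e` or `e⁻¹` is a contraction, so by Banach's theorem `e` fixes
some point `z`. Taking a similarity `u` with `u z = x`, the commutator `⁅e, u⁆` sends `x` to
`e (u (e⁻¹ z)) = e x = y`.
-/

open Function Dilation
open scoped commutatorElement

theorem ContractingWith.of_ratio_lt_one {X F : Type*} [EMetricSpace X] [FunLike F X X]
    [DilationClass F X X] (f : F) (h : ratio f < 1) : ContractingWith (ratio f) f :=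
  ⟨h, Dilation.lipschitz f⟩

namespace DilationEquiv

variable {X Y : Type*}

noncomputable def ofDistEq [MetricSpace X] [PseudoMetricSpace Y] (f : X → Y)
    (hf : Surjective f) {σ : ℝ} (hσ : 0 < σ) (h : ∀ a b, dist (f a) (f b) = σ * dist a b) :
    X ≃ᵈ Y :=
  let d : X →ᵈ Y := Dilation.mkOfDistEq f ⟨⟨σ, hσ.le⟩, Subtype.coe_ne_coe.mp hσ.ne', h⟩
  { Equiv.ofBijective f ⟨Dilation.injective d, hf⟩ with edist_eq' := d.edist_eq' }

theorem dist_eq_of_ratio_eq_one [PseudoMetricSpace X] [PseudoMetricSpace Y] (e : X ≃ᵈ Y)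
    (he : ratio e = 1) (a b : X) : dist (e a) (e b) = dist a b := by
  rw [Dilation.dist_eq, he, NNReal.coe_one, one_mul]

theorem exists_apply_eq_self_of_ratio_ne_one [MetricSpace X] [CompleteSpace X] [Nonempty X]
    (e : X ≃ᵈ X) (he : ratio e ≠ 1) : ∃ z, e z = z := by
  rcases he.lt_or_gt with h | h
  · exact ⟨_, (ContractingWith.of_ratio_lt_one e h).fixedPoint_isFixedPt⟩
  · have h_symm : ratio e.symm < 1 := by
      rw [ratio_symm]
      exact inv_lt_one_of_one_lt₀ h
    have hz := (ContractingWith.of_ratio_lt_one e.symm h_symm).fixedPoint_isFixedPt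
    exact ⟨_, ((symm_apply_eq e).mp hz).symm⟩

theorem ratio_commutatorElement [PseudoEMetricSpace X] (e u : X ≃ᵈ X) : ratio ⁅e, u⁆ = 1 := by
  have he := ratio_ne_zero e
  have hu := ratio_ne_zero u
  simp only [commutatorElement_def, mul_def, inv_def, ratio_trans, ratio_symm]
  field_simp

theorem commutatorElement_apply_of_apply_eq_self [PseudoEMetricSpace X] {e u : X ≃ᵈ X}
    {x z : X} (hz : e z = z) (hu : u z = x) : ⁅e, u⁆ x = e x := by
  have hz_symm : e.symm z = z := by rw [symm_apply_eq, hz]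
  simp [commutatorElement_def, coe_inv, ← hu, hz_symm]

theorem exists_ratio_eq_one_apply_eq [MetricSpace X] [CompleteSpace X]
    (htrans : ∀ x y : X, ∃ e : X ≃ᵈ X, e x = y) (x y : X) :
    ∃ g : X ≃ᵈ X, ratio g = 1 ∧ g x = y := by
  have : Nonempty X := ⟨x⟩
  obtain ⟨e, rfl⟩ := htrans x y
  by_cases he : ratio e = 1
  · exact ⟨e, he, rfl⟩
  obtain ⟨z, hz⟩ := e.exists_apply_eq_self_of_ratio_ne_one he
  obtain ⟨u, hu⟩ := htrans z x
  exact ⟨⁅e, u⁆, ratio_commutatorElement e u, commutatorElement_apply_of_apply_eq_self hz hu⟩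

end DilationEquiv

/-- If the group of all similarities acts transitively on a complete metric space, then
the group of isometries also acts transitively on it. -/
theorem isometry_transitive_of_similarity_transitive {X : Type*} [MetricSpace X]
    [CompleteSpace X]
    (htrans : ∀ x y : X, ∃ (f : X → X) (σ : ℝ), Function.Surjective f ∧ 0 < σ ∧
      (∀ a b : X, dist (f a) (f b) = σ * dist a b) ∧ f x = y) :
    ∀ x y : X, ∃ g : X → X, Function.Surjective g ∧
      (∀ a b : X, dist (g a) (g b) = dist a b) ∧ g x = y := by
  have hdil : ∀ x y : X, ∃ e : X ≃ᵈ X, e x = y := fun x y => by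
    obtain ⟨f, σ, hf, hσ, hdist, hfx⟩ := htrans x y
    exact ⟨.ofDistEq f hf hσ hdist, hfx⟩
  intro x y
  obtain ⟨g, hg, hgx⟩ := DilationEquiv.exists_ratio_eq_one_apply_eq hdil x y
  exact ⟨g, g.surjective, g.dist_eq_of_ratio_eq_one hg, hgx⟩
end
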